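/- arXiv:1502.04301 — 7 statements merged into one kernel-verified Lean document; each statement's English description precedes it below -/
import Mathlib

section
/- Let $A$ be a totally unimodular $m \times d$ integer matrix, let $b \in \mathbb{Z}^m$, let $n$ be a positive integer, and let $x \in \mathbb{Z}^d$ satisfy $0 \le x_j \le n$ for all $j$ and $Ax = n\cdot b$. Then there exist vectors $x^1, \dots, x^n \in \{0,1\}^d$ such that $\sum_{k=1}^n x^k = x$ and $A x^k = b$ for every $k = 1, \dots, n$. -/
/-!
Total unimodularity lets every rational solution `y` of `A y = b` be rounded to an integral
solution `z` with `⌊y⌋ ≤ z ≤ ⌈y⌉`. Move `y` along a kernel direction of `A` that vanishes on the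
integral coordinates of `y`, until one more coordinate becomes integral. When no such direction
is left, `A` stacked with the unit rows of the integral coordinates has full column rank, so it
has a nonsingular square submatrix; its determinant is `±1`, and Cramer's rule makes `y` integral.

Rounding `x / n` gives a `0/1` solution `z` of `A z = b` with `0 ≤ x - z ≤ n - 1`, and
`A (x - z) = (n - 1) b`; induction on `n` peels off these layers one at a time.
-/

section BoundaryHit

variable {K : Type*} [Field K] [LinearOrder K] [IsStrictOrderedRing K]

theorem exists_boundary_hit {a c y v : K} (hy : y ∈ Set.Icc a c) (hv : v ≠ 0) :
    ∃ τ, 0 ≤ τ ∧ (y + τ * v = a ∨ y + τ * v = c) ∧ ∀ s ∈ Set.Icc 0 τ, y + s * v ∈ Set.Icc a c := by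
  obtain ⟨hay, hyc⟩ := hy
  rcases hv.lt_or_gt with hneg | hpos
  · refine ⟨(a - y) / v, div_nonneg_of_nonpos (by linarith) hneg.le, .inl ?_, ?_⟩
    · field_simp; ring
    · rintro s ⟨hs0, hsτ⟩
      have : (a - y) / v * v = a - y := div_mul_cancel₀ _ hv
      constructor <;> nlinarith [mul_le_mul_of_nonpos_right hsτ hneg.le]
  · refine ⟨(c - y) / v, div_nonneg (by linarith) hpos.le, .inr ?_, ?_⟩
    · field_simp; ring
    · rintro s ⟨hs0, hsτ⟩
      have : (c - y) / v * v = c - y := div_mul_cancel₀ _ hv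
      constructor <;> nlinarith [mul_le_mul_of_nonneg_right hsτ hpos.le]

theorem exists_boundary_hit_pi {ι : Type*} [Fintype ι] {a c y v : ι → K}
    (hy : ∀ j, y j ∈ Set.Icc (a j) (c j)) (hv : v ≠ 0) :
    ∃ t, (∀ j, y j + t * v j ∈ Set.Icc (a j) (c j)) ∧
      ∃ j, v j ≠ 0 ∧ (y j + t * v j = a j ∨ y j + t * v j = c j) := by
  obtain ⟨j₀, hj₀⟩ := Function.ne_iff.mp hv
  have hτ (j : {j // v j ≠ 0}) := exists_boundary_hit (hy j) j.2
  choose τ hτ0 hτhit hτbox using hτ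
  obtain ⟨⟨j, hj⟩, -, hmin⟩ := Finset.exists_min_image Finset.univ τ ⟨⟨j₀, hj₀⟩, Finset.mem_univ _⟩
  refine ⟨τ ⟨j, hj⟩, fun i => ?_, j, hj, hτhit ⟨j, hj⟩⟩
  by_cases hi : v i = 0
  · simpa [hi] using hy i
  · exact hτbox ⟨i, hi⟩ _ ⟨hτ0 _, hmin _ (Finset.mem_univ _)⟩

end BoundaryHit

namespace Matrix

variable {m n K : Type*} [Fintype m] [Fintype n] [DecidableEq n] [Field K]

theorem exists_det_submatrix_ne_zero_of_mulVec_injective (M : Matrix m n K)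
    (hM : Function.Injective M.mulVec) : ∃ f : n → m, (M.submatrix f id).det ≠ 0 := by
  have hrank : M.rank = Fintype.card n := by
    rw [rank_eq_finrank_span_cols, finrank_span_eq_card (mulVec_injective_iff.mp hM)]
  have hspan : Submodule.span K (Set.range M.row) = ⊤ := by
    apply Submodule.eq_top_of_finrank_eq
    rw [← rank_eq_finrank_span_row, hrank, Module.finrank_fintype_fun_eq_card]
  obtain ⟨κ, a, -, haspan, hali⟩ := exists_linearIndependent' K M.row
  let basis : Module.Basis κ K (n → K) := .mk hali (by rw [haspan, hspan])
  let e : n ≃ κ := (Pi.basisFun K n).indexEquiv basis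
  refine ⟨a ∘ e, (isUnit_iff_isUnit_det _).mp (linearIndependent_rows_iff_isUnit.mp ?_) |>.ne_zero⟩
  exact hali.comp e e.injective

omit [Fintype m] [DecidableEq n] in
theorem map_intCast_mulVec (A : Matrix m n ℤ) (z : n → ℤ) :
    A.map Int.cast *ᵥ (Int.cast ∘ z : n → K) = Int.cast ∘ (A *ᵥ z) :=
  funext fun i => (RingHom.map_mulVec (Int.castRingHom K) A z i).symm

theorem IsTotallyUnimodular.mem_range_intCast_of_mulVec_injective {A : Matrix m n ℤ}
    (hA : A.IsTotallyUnimodular) (hinj : Function.Injective (A.map (Int.cast : ℤ → K)).mulVec)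
    {b : m → ℤ} {y : n → K} (hy : A.map Int.cast *ᵥ y = Int.cast ∘ b) :
    ∀ j, y j ∈ Set.range (Int.cast : ℤ → K) := by
  obtain ⟨f, hf⟩ := exists_det_submatrix_ne_zero_of_mulVec_injective _ hinj
  obtain ⟨s, hs⟩ := (isTotallyUnimodular_iff_fintype A).mp hA n f id
  set B := A.submatrix f id
  have hBK : (A.map (Int.cast : ℤ → K)).submatrix f id = B.map Int.cast := rfl
  have hB : IsUnit B.det := by
    rw [hBK, ← Int.cast_det] at hf
    rw [← hs] at hf ⊢
    rcases s with - | - | - <;> simp at hf ⊢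
  suffices h : Int.cast ∘ (B⁻¹ *ᵥ (b ∘ f)) = y from fun j => ⟨_, congrFun h j⟩
  refine mulVec_injective_of_det_ne_zero hf (funext fun i => ?_)
  rw [hBK, map_intCast_mulVec, mulVec_mulVec, mul_nonsing_inv B hB, one_mulVec]
  exact (congrFun hy (f i)).symm

theorem IsTotallyUnimodular.mem_range_intCast_of_ker {A : Matrix m n ℤ} (hA : A.IsTotallyUnimodular)
    {b : m → ℤ} {y : n → K} (hy : A.map Int.cast *ᵥ y = Int.cast ∘ b) (P : Set n)
    (hyP : ∀ j ∈ P, y j ∈ Set.range (Int.cast : ℤ → K))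
    (hker : ∀ v : n → K, A.map Int.cast *ᵥ v = 0 → (∀ j ∈ P, v j = 0) → v = 0) :
    ∀ j, y j ∈ Set.range (Int.cast : ℤ → K) := by
  classical
  choose c hc using hyP
  let C := (fromRows A 1).submatrix (Sum.map id ((↑) : P → n)) id
  have hC : ∀ v : n → K, C.map Int.cast *ᵥ v = Sum.elim (A.map Int.cast *ᵥ v) (v ∘ (↑)) := by
    intro v
    ext (i | j)
    · simp [C, mulVec, dotProduct]
    · simp [C, mulVec, dotProduct, one_apply]
  have hCtu : C.IsTotallyUnimodular :=
    ((fromRows_one_isTotallyUnimodular_iff A).mpr hA).submatrix _ _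
  refine hCtu.mem_range_intCast_of_mulVec_injective (b := Sum.elim b fun j => c j j.2) ?_ ?_
  · rw [← coe_mulVecLin, ← LinearMap.ker_eq_bot, ker_mulVecLin_eq_bot_iff]
    intro v hv
    rw [hC, ← Sum.elim_zero_zero, Sum.elim_eq_iff] at hv
    exact hker v hv.1 fun j hj => congrFun hv.2 ⟨j, hj⟩
  · rw [hC, hy]
    ext (i | j)
    · rfl
    · exact (hc j j.2).symm

section Rounding

variable [LinearOrder K] [IsStrictOrderedRing K] [FloorRing K]

theorem IsTotallyUnimodular.exists_integral_rounding {A : Matrix m n ℤ}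
    (hA : A.IsTotallyUnimodular) {b : m → ℤ} (y : n → K) (hy : A.map Int.cast *ᵥ y = Int.cast ∘ b) :
    ∃ z : n → ℤ, A *ᵥ z = b ∧ ∀ j, ⌊y j⌋ ≤ z j ∧ z j ≤ ⌈y j⌉ := by
  classical
  induction hN : (Finset.univ.filter fun j => y j ∉ Set.range (Int.cast : ℤ → K)).card
    using Nat.strong_induction_on generalizing y with
  | _ N ih =>
  by_cases hker : ∀ v : n → K, A.map Int.cast *ᵥ v = 0 →
      (∀ j ∈ {j | y j ∈ Set.range (Int.cast : ℤ → K)}, v j = 0) → v = 0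
  · choose z hz using hA.mem_range_intCast_of_ker hy _ (fun j hj => hj) hker
    refine ⟨z, (Int.cast_injective (α := K)).comp_left ?_, fun j => by simp [← hz j]⟩
    show (Int.cast ∘ (A *ᵥ z) : m → K) = Int.cast ∘ b
    rw [← map_intCast_mulVec (K := K), show Int.cast ∘ z = y from funext hz, hy]
  · push Not at hker
    obtain ⟨v, hAv, hvint, hv⟩ := hker
    obtain ⟨t, hbox, j₀, hvj₀, hj₀⟩ := exists_boundary_hit_pi (a := fun j => (⌊y j⌋ : K))
      (c := fun j => (⌈y j⌉ : K)) (fun j => ⟨Int.floor_le _, Int.le_ceil _⟩) hv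
    have hy' : A.map Int.cast *ᵥ (y + t • v) = Int.cast ∘ b := by
      rw [mulVec_add, mulVec_smul, hAv, smul_zero, add_zero, hy]
    have hfewer : (Finset.univ.filter fun j => y j + t * v j ∉ Set.range (Int.cast : ℤ → K)).card
        < N := by
      rw [← hN]
      refine Finset.card_lt_card ((Finset.ssubset_iff_of_subset fun j => ?_).2 ⟨j₀, ?_, ?_⟩)
      · simp only [Finset.mem_filter, Finset.mem_univ, true_and]
        exact mt fun hj => by rwa [hvint j hj, mul_zero, add_zero]
      · simpa using mt (hvint j₀) hvj₀
      · simp only [Finset.mem_filter, Finset.mem_univ, true_and, not_not]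
        rcases hj₀ with h | h <;> exact ⟨_, h.symm⟩
    obtain ⟨z, hAz, hz⟩ := ih _ hfewer (y + t • v) hy' rfl
    exact ⟨z, hAz, fun j => ⟨(Int.le_floor.2 (hbox j).1).trans (hz j).1,
      (hz j).2.trans (Int.ceil_le.2 (hbox j).2)⟩⟩

end Rounding

theorem IsTotallyUnimodular.exists_zero_one_layer {A : Matrix m n ℤ} (hA : A.IsTotallyUnimodular)
    {b : m → ℤ} {x : n → ℤ} (k : ℕ) (hx : ∀ j, 0 ≤ x j ∧ x j ≤ k + 1)
    (hAx : A *ᵥ x = (k + 1 : ℤ) • b) :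
    ∃ z : n → ℤ, (∀ j, z j = 0 ∨ z j = 1) ∧ (∀ j, 0 ≤ x j - z j ∧ x j - z j ≤ k) ∧ A *ᵥ z = b := by
  set y : n → ℚ := ((k : ℚ) + 1)⁻¹ • (Int.cast ∘ x)
  have hy : A.map Int.cast *ᵥ y = Int.cast ∘ b := by
    rw [mulVec_smul, map_intCast_mulVec, hAx]
    ext i
    simp [field]
  obtain ⟨z, hz, hzy⟩ := hA.exists_integral_rounding y hy
  refine ⟨z, fun j => ?_, fun j => ?_, hz⟩ <;>
  · have hxj : (0 : ℚ) ≤ x j ∧ (x j : ℚ) ≤ k + 1 := by exact_mod_cast hx j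
    have h₁ : 0 ≤ ⌊y j⌋ := Int.floor_nonneg.2 (mul_nonneg (by positivity) hxj.1)
    have h₂ : ⌈y j⌉ ≤ 1 := Int.ceil_le.2 (by simp [y, field]; linarith)
    have h₃ : ⌈y j⌉ ≤ x j := Int.ceil_le.2 (by simp [y, field]; nlinarith)
    have h₄ : x j - k ≤ ⌊y j⌋ := Int.le_floor.2 (by simp [y, field]; nlinarith)
    have := hzy j
    omega

end Matrix

theorem unimodular_decomposition_general (m d n : ℕ)
    (A : Matrix (Fin m) (Fin d) ℤ) (hA : A.IsTotallyUnimodular)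
    (b : Fin m → ℤ) (x : Fin d → ℤ)
    (hx : ∀ j, 0 ≤ x j ∧ x j ≤ (n : ℤ))
    (hAx : A.mulVec x = (n : ℤ) • b) :
    ∃ X : Fin n → Fin d → ℤ,
      (∀ k j, X k j = 0 ∨ X k j = 1) ∧
      (∀ j, ∑ k, X k j = x j) ∧
      (∀ k, A.mulVec (X k) = b) := by
  induction n generalizing x with
  | zero =>
    refine ⟨Fin.elim0, fun k => k.elim0, fun j => ?_, fun k => k.elim0⟩
    simp only [Finset.univ_eq_empty, Finset.sum_empty]
    have := hx j
    omega
  | succ n ih =>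
    obtain ⟨z, hz01, hxz, hAz⟩ := hA.exists_zero_one_layer n (by exact_mod_cast hx)
      (by exact_mod_cast hAx)
    obtain ⟨X, hX01, hXsum, hAX⟩ := ih (x - z) hxz (by
      rw [Matrix.mulVec_sub, hAx, hAz, Nat.cast_succ, add_smul, one_smul, add_sub_cancel_right])
    refine ⟨Fin.cons z X, Fin.cases hz01 hX01, fun j => ?_, Fin.cases hAz hAX⟩
    rw [Fin.sum_univ_succ, Fin.cons_zero]
    simp only [Fin.cons_succ, hXsum, Pi.sub_apply, add_sub_cancel]

/-- **Decomposition lemma (Lemma 1).** Given a totally unimodular `m × d` integer matrix `A`,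
an integer vector `b`, a positive integer `n`, and `x ∈ {0,1,…,n}^d` with `Ax = n·b`,
there are `x¹, …, xⁿ ∈ {0,1}^d` with `∑ xᵏ = x` and `Axᵏ = b` for all `k`. -/
theorem unimodular_decomposition (m d n : ℕ) (hn : 0 < n)
    (A : Matrix (Fin m) (Fin d) ℤ) (hA : A.IsTotallyUnimodular)
    (b : Fin m → ℤ) (x : Fin d → ℤ)
    (hx : ∀ j, 0 ≤ x j ∧ x j ≤ (n : ℤ))
    (hAx : A.mulVec x = (n : ℤ) • b) :
    ∃ X : Fin n → Fin d → ℤ,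
      (∀ k j, X k j = 0 ∨ X k j = 1) ∧
      (∀ j, ∑ k, X k j = x j) ∧
      (∀ k, A.mulVec (X k) = b) :=
  unimodular_decomposition_general m d n A hA b x hx hAx
end

section
/- Let $A$ be a totally unimodular $m \times d$ integer matrix, let $b \in \mathbb{Z}^m$, let $n \ge 2$ be an integer, and let $x \in \mathbb{Z}^d$ satisfy $0 \le x_j \le n$ for all $j$ and $Ax = n\cdot b$. Then there exists a vector $z \in \{0,1\}^d$ with $Az = b$ and $\lfloor x_j / n \rfloor \le z_j \le \lceil x_j / n \rceil$ for all $j = 1, \dots, d$. -/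
/-!
The point `x / n` lies in the polytope `{y | A y = b, ⌊x / n⌋ ≤ y ≤ ⌈x / n⌉}`, which is compact
and hence, by Krein–Milman, has an extreme point `z`. Total unimodularity makes every extreme point
integral: the columns of `A` indexed by the fractional coordinates of `z` are linearly independent
(otherwise `z` could be moved both ways along a kernel vector), so some square submatrix of them is
invertible, with determinant `±1`; solving with it shows that the fractional part of `z`, which
satisfies a system with integral right-hand side, is integral, hence zero. As `0 ≤ x ≤ n`, the box
lies in `[0, 1]ᵈ`.
-/

namespace Matrix

variable {m n K : Type*} [Fintype n]

theorem submatrix_val_mulVec [NonUnitalNonAssocSemiring K] (A : Matrix m n K) {s : Set n}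
    [DecidablePred (· ∈ s)] {v : n → K} (hv : ∀ j ∉ s, v j = 0) :
    A.submatrix id ((↑) : s → n) *ᵥ (fun j => v j) = A *ᵥ v := by
  funext i
  exact (Finset.sum_congr_set s (fun j => A i j * v j) _ (fun _ _ => rfl)
    fun j hj => by rw [hv j hj, mul_zero]).symm

theorem exists_isUnit_submatrix_of_injective_mulVec [Fintype m] [Field K] [DecidableEq n]
    (A : Matrix m n K) (hA : Function.Injective A.mulVec) : ∃ g : n → m, IsUnit (A.submatrix g id) := by
  have hspan : Submodule.span K (Set.range A.row) = ⊤ := by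
    refine Submodule.eq_top_of_finrank_eq ?_
    rw [← A.rank_eq_finrank_span_row, Matrix.rank, LinearMap.finrank_range_of_inj hA]
  obtain ⟨ι, a, ha, hspan', hli⟩ := exists_linearIndependent' K A.row
  have : Fintype ι := Fintype.ofInjective a ha
  have hcard : Fintype.card ι = Fintype.card n := by
    rw [linearIndependent_iff_card_eq_finrank_span.1 hli, Set.finrank, hspan', hspan, finrank_top,
      Module.finrank_fintype_fun_eq_card]
  let e := Fintype.equivOfCardEq hcard
  refine ⟨a ∘ e.symm, ?_⟩
  rw [← linearIndependent_rows_iff_isUnit]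
  exact hli.comp e.symm e.symm.injective

theorem IsTotallyUnimodular.exists_intCast_eq_of_mulVec_eq [Fintype m] [Field K] [DecidableEq n]
    {A : Matrix m n ℤ} (hA : A.IsTotallyUnimodular)
    (hinj : Function.Injective (A.map (Int.cast : ℤ → K)).mulVec) {b : m → ℤ} {v : n → K}
    (hv : A.map (↑) *ᵥ v = (↑) ∘ b) : ∃ z : n → ℤ, (↑) ∘ z = v := by
  obtain ⟨g, hg⟩ := (A.map (Int.cast : ℤ → K)).exists_isUnit_submatrix_of_injective_mulVec hinj
  rw [submatrix_map] at hg
  set M := A.submatrix g id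
  have hM : IsUnit M := by
    have hdet : Int.castRingHom K M.det ≠ 0 := by
      rw [RingHom.map_det]
      exact ((isUnit_iff_isUnit_det _).1 hg).ne_zero
    obtain ⟨s, hs⟩ := (isTotallyUnimodular_iff_fintype A).1 hA n g id
    rw [isUnit_iff_isUnit_det, ← hs]
    rw [← hs] at hdet
    rcases s with _ | _ | _
    · simp at hdet
    · exact isUnit_one.neg
    · exact isUnit_one
  obtain ⟨z, hz⟩ := mulVec_surjective_iff_isUnit.2 hM (b ∘ g)
  refine ⟨z, mulVec_injective_iff_isUnit.2 hg ?_⟩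
  funext i
  calc (M.map (↑) *ᵥ ((↑) ∘ z)) i = ((M *ᵥ z) i : K) :=
        (RingHom.map_mulVec (Int.castRingHom K) M z i).symm
    _ = (M.map (↑) *ᵥ v) i := by rw [hz]; exact (congrFun hv (g i)).symm

def boxPolytope (A : Matrix m n ℤ) (b : m → ℤ) (l u : n → ℤ) : Set (n → ℝ) :=
  {z | A.map (↑) *ᵥ z = (↑) ∘ b ∧ z ∈ Set.Icc ((↑) ∘ l) ((↑) ∘ u)}

variable {A : Matrix m n ℤ} {b : m → ℤ} {l u : n → ℤ}

theorem isCompact_boxPolytope : IsCompact (A.boxPolytope b l u) :=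
  isCompact_Icc.of_isClosed_subset
    ((isClosed_eq (continuous_const.matrix_mulVec continuous_id) continuous_const).inter
      isClosed_Icc)
    fun _ hz => hz.2

open Filter Topology in
theorem eq_zero_of_mem_extremePoints_boxPolytope {z : n → ℝ}
    (hz : z ∈ (A.boxPolytope b l u).extremePoints ℝ) {w : n → ℝ} (hw : A.map (↑) *ᵥ w = 0)
    (hwz : ∀ j, w j ≠ 0 → (l j : ℝ) < z j ∧ z j < u j) : w = 0 := by
  have hbox (j : n) : ∀ᶠ t in 𝓝 (0 : ℝ), (l j : ℝ) ≤ z j + t * w j ∧ z j + t * w j ≤ u j := by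
    by_cases hj : w j = 0
    · simpa [hj] using ⟨hz.1.2.1 j, hz.1.2.2 j⟩
    · have hlim : Tendsto (fun t : ℝ => z j + t * w j) (𝓝 0) (𝓝 (z j)) :=
        (by fun_prop : Continuous fun t : ℝ => z j + t * w j).tendsto' 0 (z j) (by simp)
      exact (hlim.eventually (Ioo_mem_nhds (hwz j hj).1 (hwz j hj).2)).mono
        fun t ht => ⟨ht.1.le, ht.2.le⟩
  have hnear : ∀ᶠ t in 𝓝 (0 : ℝ), z + t • w ∈ A.boxPolytope b l u := by
    filter_upwards [eventually_all.2 hbox] with t ht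
    refine ⟨?_, fun j => (ht j).1, fun j => (ht j).2⟩
    rw [mulVec_add, mulVec_smul, hw, smul_zero, add_zero, hz.1.1]
  obtain ⟨ε, hε, hball⟩ := Metric.eventually_nhds_iff.1 hnear
  have hsmall : dist (ε / 2) 0 < ε ∧ dist (-(ε / 2)) 0 < ε := by
    simp [abs_of_pos hε]; linarith
  have hmid : z ∈ openSegment ℝ (z + (ε / 2) • w) (z + (-(ε / 2)) • w) :=
    ⟨1 / 2, 1 / 2, by norm_num, by norm_num, by norm_num, by module⟩
  have hfix := hz.2 (hball hsmall.1) (hball hsmall.2) hmid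
  exact (smul_eq_zero.1 (add_eq_left.1 hfix)).resolve_left (by positivity)

theorem IsTotallyUnimodular.exists_intCast_eq_of_mem_extremePoints [Fintype m]
    (hA : A.IsTotallyUnimodular) {z : n → ℝ} (hz : z ∈ (A.boxPolytope b l u).extremePoints ℝ) :
    ∃ z' : n → ℤ, (↑) ∘ z' = z := by
  classical
  set s := Function.support fun j => Int.fract (z j)
  have hs (j : n) (hj : j ∈ s) : (l j : ℝ) < z j ∧ z j < u j := by
    have hne (k : ℤ) : z j ≠ k := fun h =>
      hj (show Int.fract (z j) = 0 by rw [h, Int.fract_intCast])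
    exact ⟨(hz.1.2.1 j).lt_of_ne (hne _).symm, (hz.1.2.2 j).lt_of_ne (hne _)⟩
  have hinj :
      Function.Injective ((A.submatrix id ((↑) : s → n)).map (Int.cast : ℤ → ℝ)).mulVec := by
    intro v₁ v₂ hv
    let w := Function.extend ((↑) : s → n) (v₁ - v₂) 0
    have hw : ∀ j ∉ s, w j = 0 := fun j hj =>
      Function.extend_apply' _ _ _ fun ⟨a, ha⟩ => hj (ha ▸ a.2)
    have hwv : (fun j : s => w j) = v₁ - v₂ :=
      funext fun j => Subtype.val_injective.extend_apply _ _ j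
    have hw0 : w = 0 := by
      refine eq_zero_of_mem_extremePoints_boxPolytope hz ?_
        fun j hj => hs j (by_contra fun h => hj (hw j h))
      rw [← (A.map (↑)).submatrix_val_mulVec hw, hwv, mulVec_sub]
      exact sub_eq_zero.2 hv
    rw [← sub_eq_zero, ← hwv, hw0]
    rfl
  have hfract : (A.submatrix id ((↑) : s → n)).map (↑) *ᵥ (fun j : s => Int.fract (z j)) =
      (↑) ∘ (b - A *ᵥ fun j => ⌊z j⌋) := by
    rw [← submatrix_map, (A.map (Int.cast : ℤ → ℝ)).submatrix_val_mulVec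
      (s := s) (v := fun j => Int.fract (z j)) fun j hj => Function.notMem_support.1 hj]
    have hsplit : (fun j => Int.fract (z j)) = z - (↑) ∘ fun j => ⌊z j⌋ := rfl
    rw [hsplit, mulVec_sub, hz.1.1]
    funext i
    simpa using (RingHom.map_mulVec (Int.castRingHom ℝ) A (fun j => ⌊z j⌋) i).symm
  obtain ⟨k, hk⟩ := (hA.submatrix id _).exists_intCast_eq_of_mulVec_eq hinj hfract
  refine ⟨fun j => ⌊z j⌋, funext fun j => ?_⟩
  suffices Int.fract (z j) = 0 by simpa [this] using (Int.floor_add_fract (z j))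
  by_contra hj
  have hkj : (k ⟨j, hj⟩ : ℝ) = Int.fract (z j) := congrFun hk ⟨j, hj⟩
  exact hj (by rw [← Int.fract_fract, ← hkj, Int.fract_intCast])

theorem IsTotallyUnimodular.exists_int_mulVec_eq_of_mem_boxPolytope [Fintype m]
    (hA : A.IsTotallyUnimodular) {y : n → ℝ} (hy : y ∈ A.boxPolytope b l u) :
    ∃ z : n → ℤ, A *ᵥ z = b ∧ l ≤ z ∧ z ≤ u := by
  obtain ⟨_, hext⟩ := isCompact_boxPolytope.extremePoints_nonempty ⟨y, hy⟩
  obtain ⟨z, rfl⟩ := hA.exists_intCast_eq_of_mem_extremePoints hext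
  obtain ⟨hAz, hlz, hzu⟩ := hext.1
  refine ⟨z, (Int.cast_injective (α := ℝ)).comp_left ?_, fun j => Int.cast_le.1 (hlz j),
    fun j => Int.cast_le.1 (hzu j)⟩
  exact (funext (RingHom.map_mulVec (Int.castRingHom ℝ) A z)).trans hAz

end Matrix

open Matrix

/-- The rounding step in the proof of Lemma 1: given a totally unimodular `m × d` integer
matrix `A`, an integer vector `b`, an integer `n ≥ 2`, and `x ∈ {0,…,n}^d` with `Ax = n·b`,
there is `z ∈ {0,1}^d` with `Az = b` and `⌊xⱼ/n⌋ ≤ zⱼ ≤ ⌈xⱼ/n⌉` for all `j`. -/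
theorem unimodular_rounding (m d n : ℕ) (hn : 2 ≤ n)
    (A : Matrix (Fin m) (Fin d) ℤ) (hA : A.IsTotallyUnimodular)
    (b : Fin m → ℤ) (x : Fin d → ℤ)
    (hx : ∀ j, 0 ≤ x j ∧ x j ≤ (n : ℤ))
    (hAx : A.mulVec x = (n : ℤ) • b) :
    ∃ z : Fin d → ℤ,
      (∀ j, z j = 0 ∨ z j = 1) ∧
      A.mulVec z = b ∧
      (∀ j, ⌊(x j : ℚ) / (n : ℚ)⌋ ≤ z j ∧ z j ≤ ⌈(x j : ℚ) / (n : ℚ)⌉) := by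
  have hn0 : (0 : ℚ) < n := by exact_mod_cast (by omega : 0 < n)
  set y : Fin d → ℝ := fun j => (x j : ℝ) / n
  have hy : y ∈ A.boxPolytope b (fun j => ⌊(x j : ℚ) / n⌋) (fun j => ⌈(x j : ℚ) / n⌉) := by
    refine ⟨funext fun i => ?_, fun j => ?_, fun j => ?_⟩
    · have hrow : (A.map (↑) *ᵥ ((↑) ∘ x)) i = (n : ℝ) * b i := by
        simpa [hAx] using (RingHom.map_mulVec (Int.castRingHom ℝ) A x i).symm
      have hy' : y = (n : ℝ)⁻¹ • ((↑) ∘ x) := by funext j; simp [y, div_eq_inv_mul]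
      rw [hy', mulVec_smul, Pi.smul_apply, hrow, smul_eq_mul, Function.comp_apply]
      field_simp
    · simpa [y] using (Rat.cast_le (K := ℝ)).2 (Int.floor_le ((x j : ℚ) / n))
    · simpa [y] using (Rat.cast_le (K := ℝ)).2 (Int.le_ceil ((x j : ℚ) / n))
  obtain ⟨z, hAz, hlz, hzu⟩ := hA.exists_int_mulVec_eq_of_mem_boxPolytope hy
  refine ⟨z, fun j => ?_, hAz, fun j => ⟨hlz j, hzu j⟩⟩
  have hfloor : 0 ≤ ⌊(x j : ℚ) / n⌋ :=
    Int.floor_nonneg.2 (div_nonneg (by exact_mod_cast (hx j).1) hn0.le)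
  have hceil : ⌈(x j : ℚ) / n⌉ ≤ 1 := Int.ceil_le.2 (by
    rw [div_le_iff₀ hn0]; exact_mod_cast (by simpa using (hx j).2))
  have hlower : ⌊(x j : ℚ) / n⌋ ≤ z j := hlz j
  have hupper : z j ≤ ⌈(x j : ℚ) / n⌉ := hzu j
  omega
end

section
/- Let $A$ be a totally unimodular $m \times d$ integer matrix, let $b \in \mathbb{Z}^m$, and let $n$ be a positive integer. Then there exist $x^1, \dots, x^n \in \{0,1\}^d$ with $A x^k = b$ for all $k$ if and only if there exist $y^1, \dots, y^n \in \{0,1\}^d$ with $A \sum_{k=1}^n y^k = n \cdot b$. -/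
/-!
The average of the `yᵏ` lies in the compact polytope `P = {x ∈ [0,1]^d | A x = b}`, so `P` has
an extreme point `x` (Krein–Milman). Moving `x` along a direction `c ≠ 0` with `A c = 0` that
vanishes on the integral coordinates of `x` would keep it in `P` in both directions, so no such `c`
exists: `x` is pinned down by the rows of the totally unimodular matrix `[A; I]` at which
`[A; I] x` is integral. A nonsingular square subsystem of these rows has determinant `±1`, hence
an integral inverse, so `x` is integral, i.e. a `0/1` solution of `A x = b`.
-/

open Matrix Topology

namespace Matrix

theorem exists_isUnit_submatrix_of_linearIndependent_col {K m n : Type*} [Field K] [Finite m]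
    [Fintype n] [DecidableEq n] {M : Matrix m n K} (hM : LinearIndependent K M.col) :
    ∃ f : n → m, Function.Injective f ∧ IsUnit (M.submatrix f id) := by
  have hspan : Submodule.span K (Set.range M.row) = ⊤ := by
    apply Submodule.eq_top_of_finrank_eq
    rw [← rank_eq_finrank_span_row, rank_eq_finrank_span_cols,
      ← Set.finrank, ← linearIndependent_iff_card_eq_finrank_span.mp hM, Module.finrank_pi]
  obtain ⟨κ, a, ha, hsp, hli⟩ := exists_linearIndependent' K M.row
  let e : κ ≃ n := (Module.Basis.mk hli (by rw [hsp, hspan])).indexEquiv (Pi.basisFun K n)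
  refine ⟨a ∘ e.symm, ha.comp e.symm.injective, ?_⟩
  rw [← linearIndependent_rows_iff_isUnit]
  exact hli.comp e.symm e.symm.injective

theorem IsTotallyUnimodular.isUnit_of_isUnit_map {n R K : Type*} [Fintype n] [DecidableEq n]
    [CommRing R] [CommRing K] [Nontrivial K] {A : Matrix n n R} (hA : A.IsTotallyUnimodular)
    (f : R →+* K) (h : IsUnit (A.map f)) : IsUnit A := by
  obtain ⟨s, hs⟩ := (isTotallyUnimodular_iff_fintype A).mp hA n id id
  rw [submatrix_id_id] at hs
  rw [isUnit_iff_isUnit_det, ← hs]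
  rcases s with _ | _ | _
  · rw [isUnit_iff_isUnit_det, ← RingHom.mapMatrix_apply, ← RingHom.map_det, ← hs] at h
    simp at h
  · simp
  · simp

theorem eq_comp_inv_mulVec_of_map_mulVec_eq {n R K : Type*} [Fintype n] [DecidableEq n]
    [CommRing R] [CommRing K] {S : Matrix n n R} (hS : IsUnit S) (f : R →+* K) {v : n → K}
    {c : n → R} (h : S.map f *ᵥ v = f ∘ c) : v = f ∘ (S⁻¹ *ᵥ c) := by
  have hinv : S⁻¹.map f * S.map f = 1 := by
    rw [← RingHom.mapMatrix_apply, ← RingHom.mapMatrix_apply, ← map_mul,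
      nonsing_inv_mul S ((isUnit_iff_isUnit_det S).mp hS), map_one]
  funext i
  rw [Function.comp_apply, RingHom.map_mulVec, ← h, mulVec_mulVec, hinv, one_mulVec]

theorem IsTotallyUnimodular.exists_eq_comp_of_integral_rows_determine {m n R K : Type*} [Finite m]
    [Fintype n] [DecidableEq n] [CommRing R] [Field K] {B : Matrix m n R}
    (hB : B.IsTotallyUnimodular) (f : R →+* K) {x : n → K}
    (hx : ∀ c : n → K, (∀ i, (B.map f *ᵥ x) i ∈ Set.range f → (B.map f *ᵥ c) i = 0) → c = 0) :
    ∃ z : n → R, x = f ∘ z := by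
  let T := {i // (B.map f *ᵥ x) i ∈ Set.range f}
  have hcol : LinearIndependent K ((B.map f).submatrix (Subtype.val : T → m) id).col := by
    rw [← mulVec_injective_iff]
    intro c₁ c₂ h
    refine sub_eq_zero.mp (hx _ fun i hi => ?_)
    rw [mulVec_sub, Pi.sub_apply, sub_eq_zero]
    exact congrFun h ⟨i, hi⟩
  obtain ⟨g, -, hg⟩ := exists_isUnit_submatrix_of_linearIndependent_col hcol
  have hS : IsUnit (B.submatrix (Subtype.val ∘ g) id) :=
    (hB.submatrix _ _).isUnit_of_isUnit_map f (by simpa [submatrix_map] using hg)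
  choose c hc using fun l => (g l).2
  refine ⟨_, eq_comp_inv_mulVec_of_map_mulVec_eq hS f (c := c) ?_⟩
  funext l
  exact (hc l).symm

theorem eq_zero_of_mulVec_eq_zero_of_mem_extremePoints {m n : Type*} [Fintype n]
    {A : Matrix m n ℝ} {b : m → ℝ} {x c : n → ℝ}
    (hx : x ∈ Set.extremePoints ℝ {x | A *ᵥ x = b ∧ x ∈ Set.Icc 0 1})
    (hAc : A *ᵥ c = 0) (hc : ∀ j, x j = 0 ∨ x j = 1 → c j = 0) : c = 0 := by
  obtain ⟨⟨hxA, hx0, hx1⟩, hext⟩ := hx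
  have hcoord : ∀ j, ∀ᶠ t in 𝓝 (0 : ℝ), x j + t * c j ∈ Set.Icc 0 1 := by
    intro j
    by_cases hj : x j = 0 ∨ x j = 1
    · exact .of_forall fun t => by simpa [hc j hj] using ⟨hx0 j, hx1 j⟩
    · have hxj : x j ∈ Set.Ioo 0 1 :=
        ⟨(hx0 j).lt_of_ne' (by tauto), (hx1 j).lt_of_ne (by tauto)⟩
      have hlim : Filter.Tendsto (fun t : ℝ => x j + t * c j) (𝓝 0) (𝓝 (x j)) :=
        (by fun_prop : Continuous fun t : ℝ => x j + t * c j).tendsto' 0 (x j) (by simp)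
      exact (hlim.eventually (isOpen_Ioo.mem_nhds hxj)).mono fun _ h => Set.Ioo_subset_Icc_self h
  have hnear : ∀ᶠ t in 𝓝 (0 : ℝ), x + t • c ∈ {x | A *ᵥ x = b ∧ x ∈ Set.Icc 0 1} := by
    filter_upwards [Filter.eventually_all.2 hcoord] with t ht
    exact ⟨by simp [mulVec_add, mulVec_smul, hxA, hAc], fun j => (ht j).1, fun j => (ht j).2⟩
  have hboth := hnear.and ((continuous_neg.tendsto' (0 : ℝ) 0 neg_zero).eventually hnear)
  obtain ⟨t, ⟨hplus, hminus⟩, ht⟩ :=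
    ((hboth.filter_mono nhdsWithin_le_nhds).and (self_mem_nhdsWithin (s := {0}ᶜ))).exists
  have hseg : x ∈ openSegment ℝ (x + (-t) • c) (x + t • c) := by
    simpa [sub_eq_add_neg] using mem_openSegment_sub_add (𝕜 := ℝ) x (t • c)
  simpa [show t ≠ 0 from ht] using hext hminus hplus hseg

theorem IsTotallyUnimodular.exists_binary_mulVec_eq {m n : Type*} [Fintype m] [Fintype n]
    [DecidableEq n] {A : Matrix m n ℤ} (hA : A.IsTotallyUnimodular) {b : m → ℤ} {x : n → ℝ}
    (hx : x ∈ Set.Icc 0 1) (hAx : A.map (Int.cast : ℤ → ℝ) *ᵥ x = Int.cast ∘ b) :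
    ∃ z : n → ℤ, (∀ j, z j = 0 ∨ z j = 1) ∧ A *ᵥ z = b := by
  let P := {x : n → ℝ | A.map (Int.cast : ℤ → ℝ) *ᵥ x = Int.cast ∘ b ∧ x ∈ Set.Icc 0 1}
  have hP : IsCompact P := isCompact_Icc.inter_left (isClosed_eq (by fun_prop) continuous_const)
  obtain ⟨y, hy⟩ := hP.extremePoints_nonempty ⟨x, hAx, hx⟩
  have hB := (fromRows_one_isTotallyUnimodular_iff A).mpr hA
  -- `y` is integral on every row of `A`, and on the row `eⱼ` whenever `y j ∈ {0, 1}`.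
  obtain ⟨z, rfl⟩ := hB.exists_eq_comp_of_integral_rows_determine (Int.castRingHom ℝ) (x := y)
    fun c hc => by
      simp only [Int.coe_castRingHom, fromRows_map, Int.cast_zero, Int.cast_one, Matrix.map_one,
        fromRows_mulVec, one_mulVec, Set.mem_range, forall_exists_index, Sum.forall, Sum.elim_inl,
        Sum.elim_inr] at hc
      refine eq_zero_of_mulVec_eq_zero_of_mem_extremePoints hy
        (funext fun i => hc.1 i (b i) (by simp [hy.1.1])) fun j hj => ?_
      rcases hj with h | h
      · exact hc.2 j 0 (by simp [h])
      · exact hc.2 j 1 (by simp [h])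
  obtain ⟨⟨hzA, hz0, hz1⟩, -⟩ := hy
  refine ⟨z, fun j => ?_, funext fun i => Int.cast_injective (α := ℝ) ?_⟩
  · have h0 : (0 : ℝ) ≤ z j := hz0 j
    have h1 : (z j : ℝ) ≤ 1 := hz1 j
    norm_cast at h0 h1
    omega
  · simpa using (RingHom.map_mulVec (Int.castRingHom ℝ) A z i).trans (congrFun hzA i)

theorem IsTotallyUnimodular.exists_binary_mulVec_eq_of_sum {ι m n : Type*} [Fintype ι]
    [Nonempty ι] [Fintype m] [Fintype n] [DecidableEq n] {A : Matrix m n ℤ}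
    (hA : A.IsTotallyUnimodular) {b : m → ℤ} {y : ι → n → ℤ} (hy : ∀ k j, y k j = 0 ∨ y k j = 1)
    (hyA : A *ᵥ (fun j => ∑ k, y k j) = (Fintype.card ι : ℤ) • b) :
    ∃ z : n → ℤ, (∀ j, z j = 0 ∨ z j = 1) ∧ A *ᵥ z = b := by
  have hcard : (0 : ℝ) < Fintype.card ι := by exact_mod_cast Fintype.card_pos
  let yR : ι → n → ℝ := fun k j => y k j
  have hcube : ∀ k j, yR k j ∈ Set.Icc 0 1 := fun k j => by
    rcases hy k j with h | h <;> simp [yR, h]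
  refine hA.exists_binary_mulVec_eq ((convex_Icc (0 : n → ℝ) 1).sum_mem
    (t := Finset.univ) (w := fun _ => (Fintype.card ι : ℝ)⁻¹) (fun _ _ => by positivity)
    (by simp [hcard.ne']) fun k _ => ⟨fun j => (hcube k j).1, fun j => (hcube k j).2⟩) ?_
  have hsum : ∑ k, yR k = Int.cast ∘ fun j => ∑ k, y k j := by
    ext j
    simp [yR]
  ext i
  have hi := RingHom.map_mulVec (Int.castRingHom ℝ) A (fun j => ∑ k, y k j) i
  rw [hyA] at hi
  rw [← Finset.smul_sum, mulVec_smul, hsum]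
  simp only [Int.coe_castRingHom, Pi.smul_apply, smul_eq_mul, Int.cast_mul, Int.cast_natCast] at hi
  rw [Pi.smul_apply, smul_eq_mul, ← hi, inv_mul_cancel_left₀ hcard.ne', Function.comp_apply]

end Matrix

/-- For a totally unimodular `m × d` integer matrix `A`, an integer vector `b`, and a
positive integer `n`: there are `x¹,…,xⁿ ∈ {0,1}^d` with `Axᵏ = b` for all `k` iff
there are `y¹,…,yⁿ ∈ {0,1}^d` with `A(∑ₖ yᵏ) = n·b`. -/
theorem feasibility_iff (m d n : ℕ) (hn : 0 < n)
    (A : Matrix (Fin m) (Fin d) ℤ) (hA : A.IsTotallyUnimodular)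
    (b : Fin m → ℤ) :
    (∃ x : Fin n → Fin d → ℤ,
        (∀ k j, x k j = 0 ∨ x k j = 1) ∧ ∀ k, A.mulVec (x k) = b) ↔
    (∃ y : Fin n → Fin d → ℤ,
        (∀ k j, y k j = 0 ∨ y k j = 1) ∧
        A.mulVec (fun j => ∑ k, y k j) = (n : ℤ) • b) := by
  constructor
  · rintro ⟨x, hx01, hxA⟩
    refine ⟨x, hx01, ?_⟩
    simp [← Finset.sum_fn, mulVec_sum, hxA]
  · rintro ⟨y, hy01, hyA⟩
    have : Nonempty (Fin n) := ⟨⟨0, hn⟩⟩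
    obtain ⟨z, hz01, hzA⟩ := hA.exists_binary_mulVec_eq_of_sum hy01 (by simpa using hyA)
    exact ⟨fun _ => z, fun _ => hz01, fun _ => hzA⟩
end

section
/- Let $A$ be a totally unimodular $m \times d$ integer matrix, let $b \in \mathbb{Z}^m$, let $n$ be a positive integer, and let $c = (c^1, \dots, c^n)$ with each $c^k \in \mathbb{Z}^d$ be nondecreasing, i.e. $c^k_i \le c^{k+1}_i$ for all $1 \le k < n$ and $1 \le i \le d$. Suppose $y = (y^1, \dots, y^n)$ with each $y^k \in \{0,1\}^d$ minimizes $cy$ over all $y' = (y'^1, \dots, y'^n)$ with each $y'^k \in \{0,1\}^d$ and $A \sum_{k=1}^n y'^k = n\cdot b$, and suppose $z = (z^1, \dots, z^n)$ with each $z^k \in \{0,1\}^d$ satisfies $\sum_{k=1}^n z^k = \sum_{k=1}^n y^k$ and $A z^k = b$ for all $k$. Then $z$ minimizes $c\bar{x}$ over all $x = (x^1, \dots, x^n)$ with each $x^k \in \{0,1\}^d$ and $A x^k = b$ for all $k$; that is, $c\bar{z} \le c\bar{x}$ for every such feasible $x$. -/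
/-- The compression `x̄` of `x = (x¹,…,xⁿ)`, `xᵏ ∈ {0,1}^d`: here `k : Fin n` encodes the
index `k+1 ∈ {1,…,n}`, and `x̄ᵏᵢ = 1` if `k+1 ≤ ∑ l, xˡᵢ` and `x̄ᵏᵢ = 0` otherwise. -/
def compression (n d : ℕ) (x : Fin n → Fin d → ℤ) : Fin n → Fin d → ℤ :=
  fun k i => if ((k : ℕ) + 1 : ℤ) ≤ ∑ l, x l i then 1 else 0

/-- The pairing `cx := ∑ₖ ∑ᵢ cᵏᵢ xᵏᵢ`. -/
def pairing (n d : ℕ) (c x : Fin n → Fin d → ℤ) : ℤ :=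
  ∑ k, ∑ i, c k i * x k i

open Finset

lemma sum_indicator (j s : ℕ) :
    ∑ k ∈ range j, (if k < s then (1:ℤ) else 0) = ((min j s : ℕ) : ℤ) := by
  induction j with
  | zero => simp
  | succ j ih =>
    rw [Finset.sum_range_succ, ih]
    by_cases h : j < s
    · rw [if_pos h]; omega
    · rw [if_neg h]; omega

lemma sum01_nonneg {n d : ℕ} (x : Fin n → Fin d → ℤ)
    (hx : ∀ k j, x k j = 0 ∨ x k j = 1) (i : Fin d) : (0:ℤ) ≤ ∑ l, x l i :=
  Finset.sum_nonneg fun l _ => by rcases hx l i with h | h <;> simp [h]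

lemma sum01_le_n {n d : ℕ} (x : Fin n → Fin d → ℤ)
    (hx : ∀ k j, x k j = 0 ∨ x k j = 1) (i : Fin d) : ∑ l, x l i ≤ (n:ℤ) := by
  calc ∑ l, x l i ≤ ∑ _l : Fin n, (1:ℤ) :=
        Finset.sum_le_sum fun l _ => by rcases hx l i with h | h <;> simp [h]
    _ = n := by simp

/-- column sums are preserved by compression -/
lemma compression_sum {n d : ℕ} (x : Fin n → Fin d → ℤ)
    (hx : ∀ k j, x k j = 0 ∨ x k j = 1) (i : Fin d) :
    ∑ k, compression n d x k i = ∑ k, x k i := by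
  have h0 : 0 ≤ ∑ l, x l i := sum01_nonneg x hx i
  have h1 : ∑ l, x l i ≤ (n:ℤ) := sum01_le_n x hx i
  obtain ⟨s, hs⟩ : ∃ s : ℕ, (s:ℤ) = ∑ l, x l i := ⟨_, Int.toNat_of_nonneg h0⟩
  have hsn : s ≤ n := by omega
  have key : ∑ k, compression n d x k i
      = ∑ k ∈ range n, (if k < s then (1:ℤ) else 0) := by
    rw [← Fin.sum_univ_eq_sum_range (fun k => if k < s then (1:ℤ) else 0) n]
    refine Finset.sum_congr rfl fun k _ => ?_
    simp only [compression]
    refine if_congr ?_ rfl rfl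
    rw [← hs]
    constructor <;> intro <;> omega
  rw [key, sum_indicator, ← hs]
  omega

/-- the key inequality: compression does not increase the cost for monotone c -/
lemma compression_cost_le {n d : ℕ} (hn : 0 < n) (x : Fin n → Fin d → ℤ)
    (hx : ∀ k j, x k j = 0 ∨ x k j = 1) (i : Fin d) (c : Fin n → Fin d → ℤ)
    (hc : ∀ (k : ℕ) (h : k + 1 < n) (i : Fin d),
      c ⟨k, Nat.lt_of_succ_lt h⟩ i ≤ c ⟨k + 1, h⟩ i) :
    ∑ k, c k i * compression n d x k i ≤ ∑ k, c k i * x k i := by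
  have h0 : 0 ≤ ∑ l, x l i := sum01_nonneg x hx i
  have h1 : ∑ l, x l i ≤ (n:ℤ) := sum01_le_n x hx i
  obtain ⟨s, hs⟩ : ∃ s : ℕ, (s:ℤ) = ∑ l, x l i := ⟨_, Int.toNat_of_nonneg h0⟩
  have hsn : s ≤ n := by omega
  set C : ℕ → ℤ := fun k => c ⟨k % n, Nat.mod_lt k hn⟩ i with hC
  set X : ℕ → ℤ := fun k => if h : k < n then x ⟨k, h⟩ i else 0 with hX
  set B : ℕ → ℤ := fun k => if k < s then (1:ℤ) else 0 with hB
  have hXn : ∑ k ∈ range n, X k = ∑ l, x l i := by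
    rw [← Fin.sum_univ_eq_sum_range X n]
    refine Finset.sum_congr rfl fun k _ => ?_
    simp [hX, k.isLt]
  have hXsum : ∀ j, j ≤ n → ∑ k ∈ range j, X k ≤ ((min j s : ℕ) : ℤ) := by
    intro j hj
    have hle1 : ∀ k ∈ range j, X k ≤ 1 := by
      intro k hk
      simp only [hX]
      split
      · rcases hx ⟨k, ‹_›⟩ i with h | h <;> simp [h]
      · norm_num
    have h01 : ∀ k ∈ range n, 0 ≤ X k := by
      intro k hk
      simp only [hX]
      split
      · rcases hx ⟨k, ‹_›⟩ i with h | h <;> simp [h]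
      · exact le_refl 0
    have hXj : ∑ k ∈ range j, X k ≤ (j:ℤ) := by
      calc ∑ k ∈ range j, X k ≤ ∑ _k ∈ range j, (1:ℤ) := Finset.sum_le_sum hle1
        _ = j := by simp
    have hXs : ∑ k ∈ range j, X k ≤ (s:ℤ) := by
      rw [hs]
      calc ∑ k ∈ range j, X k ≤ ∑ k ∈ range n, X k :=
            Finset.sum_le_sum_of_subset_of_nonneg
              (Finset.range_subset_range.2 hj) (fun k hk _ => h01 k hk)
        _ = ∑ l, x l i := hXn
    omega
  -- translate goal to range sums
  have hgoalL : ∑ k, c k i * compression n d x k i = ∑ k ∈ range n, C k * B k := by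
    rw [← Fin.sum_univ_eq_sum_range (fun k => C k * B k) n]
    refine Finset.sum_congr rfl fun k _ => ?_
    have hk : (k:ℕ) % n = (k:ℕ) := Nat.mod_eq_of_lt k.isLt
    have hCk : C (k:ℕ) = c k i := by
      simp only [hC]; congr 1; ext; simp [hk]
    have hBk : B (k:ℕ) = compression n d x k i := by
      simp only [hB, compression]
      refine if_congr ?_ rfl rfl
      rw [← hs]
      constructor <;> intro <;> omega
    rw [hCk, hBk]
  have hgoalR : ∑ k, c k i * x k i = ∑ k ∈ range n, C k * X k := by
    rw [← Fin.sum_univ_eq_sum_range (fun k => C k * X k) n]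
    refine Finset.sum_congr rfl fun k _ => ?_
    have hk : (k:ℕ) % n = (k:ℕ) := Nat.mod_eq_of_lt k.isLt
    have hCk : C (k:ℕ) = c k i := by
      simp only [hC]; congr 1; ext; simp [hk]
    have hXk : X (k:ℕ) = x k i := by simp [hX, k.isLt]
    rw [hCk, hXk]
  rw [hgoalL, hgoalR]
  -- Abel summation
  set g : ℕ → ℤ := fun k => X k - B k with hg
  have hGle : ∀ j, j ≤ n → ∑ k ∈ range j, g k ≤ 0 := by
    intro j hj
    simp only [hg, Finset.sum_sub_distrib]
    rw [sum_indicator]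
    have := hXsum j hj
    omega
  have hGn : ∑ k ∈ range n, g k = 0 := by
    simp only [hg, Finset.sum_sub_distrib]
    rw [sum_indicator, hXn, ← hs]
    omega
  have habel := Finset.sum_range_by_parts C g n
  simp only [smul_eq_mul] at habel
  have key : 0 ≤ ∑ k ∈ range n, C k * g k := by
    rw [habel, hGn, mul_zero, zero_sub, neg_nonneg]
    apply Finset.sum_nonpos
    intro j hj
    rw [Finset.mem_range] at hj
    have hle : C j ≤ C (j+1) := by
      simp only [hC]
      have hj1 : j % n = j := Nat.mod_eq_of_lt (by omega)
      have hj2 : (j+1) % n = j+1 := Nat.mod_eq_of_lt (by omega)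
      have := hc j (by omega) i
      convert this using 2 <;> ext <;> simp [hj1, hj2]
    have h2 : ∑ k ∈ range (j+1), g k ≤ 0 := hGle (j+1) (by omega)
    exact mul_nonpos_of_nonneg_of_nonpos (by linarith) h2
  have hsplit : ∑ k ∈ range n, C k * g k
      = ∑ k ∈ range n, C k * X k - ∑ k ∈ range n, C k * B k := by
    simp only [hg, mul_sub, Finset.sum_sub_distrib]
  linarith
/-- If `y` minimizes `cy` over the relaxation `{y' ∈ {0,1}^{dn} : A ∑ₖ y'ᵏ = n·b}` and
`z ∈ {0,1}^{dn}` satisfies `∑ₖ zᵏ = ∑ₖ yᵏ` and `Azᵏ = b` for all `k`, then `z` minimizes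
`c x̄` over all `x ∈ {0,1}^{dn}` with `Axᵏ = b` for all `k`. -/
theorem optimality_of_decomposed (m d n : ℕ) (hn : 0 < n)
    (A : Matrix (Fin m) (Fin d) ℤ) (hA : A.IsTotallyUnimodular)
    (b : Fin m → ℤ) (c : Fin n → Fin d → ℤ)
    (hc : ∀ (k : ℕ) (h : k + 1 < n) (i : Fin d),
      c ⟨k, Nat.lt_of_succ_lt h⟩ i ≤ c ⟨k + 1, h⟩ i)
    (y : Fin n → Fin d → ℤ) (hy : ∀ k j, y k j = 0 ∨ y k j = 1)
    (hyfeas : A.mulVec (fun j => ∑ k, y k j) = (n : ℤ) • b)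
    (hymin : ∀ y' : Fin n → Fin d → ℤ,
      (∀ k j, y' k j = 0 ∨ y' k j = 1) →
      A.mulVec (fun j => ∑ k, y' k j) = (n : ℤ) • b →
      pairing n d c y ≤ pairing n d c y')
    (z : Fin n → Fin d → ℤ) (hz : ∀ k j, z k j = 0 ∨ z k j = 1)
    (hzy : ∀ j, ∑ k, z k j = ∑ k, y k j)
    (hzfeas : ∀ k, A.mulVec (z k) = b) :
    ∀ x : Fin n → Fin d → ℤ,
      (∀ k j, x k j = 0 ∨ x k j = 1) →
      (∀ k, A.mulVec (x k) = b) →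
      pairing n d c (compression n d z) ≤ pairing n d c (compression n d x) := by
  intro x hx hxfeas
  have hzbar : compression n d z = compression n d y := by
    funext k i
    simp only [compression, hzy i]
  have hxbar01 : ∀ k j, compression n d x k j = 0 ∨ compression n d x k j = 1 := by
    intro k j; unfold compression; split <;> simp
  have hxbarfeas : A.mulVec (fun j => ∑ k, compression n d x k j) = (n : ℤ) • b := by
    have heq : (fun j => ∑ k, compression n d x k j) = fun j => ∑ k, x k j :=
      funext fun j => compression_sum x hx j
    rw [heq]
    funext r
    have hpt : ∀ k, ∑ i, A r i * x k i = b r := by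
      intro k
      have := congrFun (hxfeas k) r
      simpa [Matrix.mulVec, dotProduct] using this
    simp only [Matrix.mulVec, dotProduct]
    calc ∑ i, A r i * ∑ k, x k i = ∑ i, ∑ k, A r i * x k i := by
          simp [Finset.mul_sum]
      _ = ∑ k, ∑ i, A r i * x k i := Finset.sum_comm
      _ = ∑ _k : Fin n, b r := Finset.sum_congr rfl fun k _ => hpt k
      _ = ((n:ℤ) • b) r := by
          simp [Finset.sum_const, Pi.smul_apply, smul_eq_mul, mul_comm]
  have h1 : pairing n d c y ≤ pairing n d c (compression n d x) :=
    hymin _ hxbar01 hxbarfeas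
  have h2 : pairing n d c (compression n d y) ≤ pairing n d c y := by
    unfold pairing
    calc ∑ k, ∑ i, c k i * compression n d y k i
        = ∑ i, ∑ k, c k i * compression n d y k i := Finset.sum_comm
      _ ≤ ∑ i, ∑ k, c k i * y k i :=
          Finset.sum_le_sum fun i _ => compression_cost_le hn y hy i c hc
      _ = ∑ k, ∑ i, c k i * y k i := Finset.sum_comm
  rw [hzbar]
  exact le_trans h2 h1
end

section
/- Let $A$ be a totally unimodular $m \times d$ integer matrix, let $b \in \mathbb{Z}^m$, let $n$ be a positive integer, and let $c = (c^1, \dots, c^n)$ with each $c^k \in \mathbb{Z}^d$ be nondecreasing, i.e. $c^k_i \le c^{k+1}_i$ for all $1 \le k < n$ and $1 \le i \le d$. If the set $F := \{x = (x^1, \dots, x^n) : x^k \in \{0,1\}^d,\, A x^k = b \text{ for } k = 1, \dots, n\}$ is nonempty, then the minimum of $c\bar{x}$ over $x \in F$ equals the minimum of $cy$ over all $y = (y^1, \dots, y^n)$ with each $y^k \in \{0,1\}^d$ and $A \sum_{k=1}^n y^k = n\cdot b$. -/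
/-!
A totally unimodular system `A w = b` with integral box constraints `l ≤ w ≤ u` has an integral
solution as soon as it has a rational one: a rational solution with the fewest coordinates
strictly inside their bounds has linearly independent columns on those coordinates (otherwise a
kernel direction pushes one more coordinate onto a bound), and a nonsingular square submatrix,
having determinant `±1`, has an integral inverse.

If `y` is feasible for the relaxation, `z = ∑ₖ yᵏ` satisfies `0 ≤ z ≤ n` and `A z = n b`, so
`z / n` is a rational point of the box `max 0 (z - n + 1) ≤ w ≤ min 1 z`; an integral point `w`
there is a `0/1` solution of `A w = b` leaving `z - w` of the same kind with `n - 1`. Hence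
`z = ∑ₖ xᵏ` with `x ∈ F`, and as the compression only depends on column sums,
`c x̄ = c ȳ ≤ c y`: for nondecreasing `c`, compression moves the ones of each column to the
cheapest positions. Conversely `x̄` is feasible for the relaxation whenever `x ∈ F`.
-/

open Matrix Finset

section StepToBound

variable {ι K : Type*} [Fintype ι] [Field K] [LinearOrder K] [IsStrictOrderedRing K]

theorem exists_add_smul_mem_Icc_hits_bound {l u q g : ι → K} (hlq : l ≤ q) (hqu : q ≤ u)
    (hg : g ≠ 0) :
    ∃ t : K, l ≤ q + t • g ∧ q + t • g ≤ u ∧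
      ∃ j, g j ≠ 0 ∧ (q j + t * g j = l j ∨ q j + t * g j = u j) := by
  classical
  -- the step length after which coordinate `j` reaches the bound it moves towards
  let ρ : ι → K := fun j => if 0 < g j then (u j - q j) / g j else (l j - q j) / g j
  obtain ⟨j₀, hj₀, hmin⟩ := exists_min_image {j | g j ≠ 0} ρ
    (by simpa [filter_nonempty_iff, Function.ne_iff] using hg)
  have hj₀' : g j₀ ≠ 0 := by simpa using hj₀
  have hρ₀ : 0 ≤ ρ j₀ := by
    rcases hj₀'.lt_or_gt with hneg | hpos
    · simp only [ρ, if_neg hneg.not_gt]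
      exact div_nonneg_of_nonpos (by linarith [hlq j₀]) hneg.le
    · simp only [ρ, if_pos hpos]
      exact div_nonneg (by linarith [hqu j₀]) hpos.le
  have hbounds : ∀ j, l j ≤ q j + ρ j₀ * g j ∧ q j + ρ j₀ * g j ≤ u j := by
    intro j
    rcases lt_trichotomy (g j) 0 with hneg | hzero | hpos
    · have hle : ρ j₀ ≤ (l j - q j) / g j := by
        simpa [ρ, hneg.not_gt] using hmin j (by simpa using hneg.ne)
      rw [le_div_iff_of_neg hneg] at hle
      constructor <;> nlinarith [hlq j, hqu j]
    · simp [hzero, hlq j, hqu j]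
    · have hle : ρ j₀ ≤ (u j - q j) / g j := by
        simpa [ρ, hpos] using hmin j (by simpa using hpos.ne')
      rw [le_div_iff₀ hpos] at hle
      constructor <;> nlinarith [hlq j, hqu j]
  refine ⟨ρ j₀, fun j => (hbounds j).1, fun j => (hbounds j).2, j₀, hj₀', ?_⟩
  by_cases hpos : 0 < g j₀
  · right; simp only [ρ, if_pos hpos]; field_simp; ring
  · left; simp only [ρ, if_neg hpos]; field_simp; ring

end StepToBound

namespace Matrix

variable {m k K : Type*} [Fintype m] [Fintype k] [DecidableEq k] [Field K]

theorem exists_submatrix_rows_isUnit {B : Matrix m k K} (hB : LinearIndependent K B.col) :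
    ∃ r : k → m, IsUnit (B.submatrix r id) := by
  have hspan : Submodule.span K (Set.range B.row) = ⊤ := by
    refine Submodule.eq_top_of_finrank_eq ?_
    rw [← rank_eq_finrank_span_row, ← rank_transpose, LinearIndependent.rank_matrix hB,
      Module.finrank_fintype_fun_eq_card]
  obtain ⟨κ, a, -, hsp, hli⟩ := exists_linearIndependent' K B.row
  let e : κ ≃ k := ((Module.Basis.mk hli (by rw [hsp, hspan])).indexEquiv (Pi.basisFun K k))
  exact ⟨a ∘ e.symm, linearIndependent_rows_iff_isUnit.mp (hli.comp e.symm e.symm.injective)⟩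

theorem IsTotallyUnimodular.exists_eq_intCast_of_linearIndependent {A : Matrix m k ℤ}
    (hA : A.IsTotallyUnimodular) (hli : LinearIndependent K (A.map ((↑) : ℤ → K)).col)
    {v : k → K} {t : m → ℤ} (hv : A.map (↑) *ᵥ v = (↑) ∘ t) :
    ∃ w : k → ℤ, v = (↑) ∘ w := by
  obtain ⟨r, hr⟩ := exists_submatrix_rows_isUnit hli
  set C := A.submatrix r id
  have hC : IsUnit C.det := by
    have hCK : IsUnit (C.det : K) := by
      rw [Int.cast_det]
      exact (isUnit_iff_isUnit_det _).mp hr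
    obtain ⟨s, hs⟩ := (isTotallyUnimodular_iff_fintype A).mp hA k r id
    rcases s with _ | _ | _
    · simp [C, ← hs] at hCK
    all_goals simp [C, ← hs]
  have hCv : C.map (↑) *ᵥ v = (↑) ∘ (t ∘ r) := funext fun i => congrFun hv (r i)
  refine ⟨C⁻¹ *ᵥ (t ∘ r), ?_⟩
  calc v = (C⁻¹ * C).map (Int.castRingHom K) *ᵥ v := by rw [nonsing_inv_mul C hC]; simp
    _ = (↑) ∘ (C⁻¹ *ᵥ (t ∘ r)) := by
      rw [Matrix.map_mul, ← mulVec_mulVec, Int.coe_castRingHom, hCv]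
      exact funext fun i => ((Int.castRingHom K).map_mulVec C⁻¹ (t ∘ r) i).symm

theorem IsTotallyUnimodular.exists_eq_intCast_of_linearIndepOn {n : Type*} [Fintype n]
    {A : Matrix m n ℤ} (hA : A.IsTotallyUnimodular) {S : Set n}
    (hS : LinearIndepOn K (A.map ((↑) : ℤ → K)).col S) {q : n → K} {b : m → ℤ}
    (hq : A.map (↑) *ᵥ q = (↑) ∘ b) {p : n → ℤ} (hp : ∀ j ∉ S, q j = p j) :
    ∃ w : n → ℤ, q = (↑) ∘ w := by
  classical
  have hv : (A.submatrix id ((↑) : S → n)).map (↑) *ᵥ (fun j => q j - p j) =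
      ((↑) : ℤ → K) ∘ (b - A *ᵥ p) := by
    funext i
    have hsplit := Fintype.sum_subtype_add_sum_subtype (· ∈ S)
      (fun j => (A i j : K) * (q j - p j))
    have hout : ∑ j : {j // j ∉ S}, (A i j : K) * (q j - p j) = 0 :=
      sum_eq_zero fun j _ => by rw [hp j j.2, sub_self, mul_zero]
    have hfull := congrFun hq i
    simp only [mulVec, dotProduct, map_apply, Function.comp_apply] at hfull
    simp only [mulVec, dotProduct, map_apply, submatrix_apply, id, Function.comp_apply,
      Pi.sub_apply, Int.cast_sub, Int.cast_sum, Int.cast_mul]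
    rw [hout, add_zero] at hsplit
    rw [hsplit, ← hfull]
    simp only [mul_sub, sum_sub_distrib]
  obtain ⟨w, hw⟩ := (hA.submatrix id ((↑) : S → n)).exists_eq_intCast_of_linearIndependent hS hv
  refine ⟨fun j => if h : j ∈ S then w ⟨j, h⟩ + p j else p j, funext fun j => ?_⟩
  by_cases h : j ∈ S
  · have := congrFun hw ⟨j, h⟩
    simp only [Function.comp_apply] at this
    simp [h, ← this]
  · simp [h, hp j h]

theorem IsTotallyUnimodular.exists_int_mulVec_eq_of_le_of_le {n : Type*} [Fintype n]
    [LinearOrder K] [IsStrictOrderedRing K] {A : Matrix m n ℤ} (hA : A.IsTotallyUnimodular)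
    {b : m → ℤ} {l u : n → ℤ} {q : n → K} (hq : A.map (↑) *ᵥ q = (↑) ∘ b)
    (hlq : (↑) ∘ l ≤ q) (hqu : q ≤ (↑) ∘ u) :
    ∃ w : n → ℤ, A *ᵥ w = b ∧ l ≤ w ∧ w ≤ u := by
  classical
  induction hN : #{j | q j ≠ l j ∧ q j ≠ u j} using Nat.strong_induction_on
    generalizing q with
  | _ N ih =>
  set S : Finset n := {j | q j ≠ l j ∧ q j ≠ u j} with hS
  by_cases hli : LinearIndepOn K (A.map ((↑) : ℤ → K)).col (S : Set n)
  · obtain ⟨w, rfl⟩ := hA.exists_eq_intCast_of_linearIndepOn hli hq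
      (p := fun j => if q j = l j then l j else u j) fun j hj => by
        simp only [hS, coe_filter, mem_univ, true_and, Set.mem_ofPred_eq,
          not_and_or, not_not] at hj
        split_ifs with h <;> simp_all
    refine ⟨w, funext fun i => ?_, fun j => ?_, fun j => ?_⟩
    · have := (Int.castRingHom K).map_mulVec A w i
      rw [Int.coe_castRingHom, hq] at this
      exact Int.cast_injective this
    · exact Int.cast_le.mp (hlq j)
    · exact Int.cast_le.mp (hqu j)
  · obtain ⟨f, hf, j₁, hj₁, hfj₁⟩ := not_linearIndepOn_finset_iff.mp hli
    set g : n → K := fun j => if j ∈ S then f j else 0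
    have hg : A.map (↑) *ᵥ g = 0 := by
      funext i
      have := congrFun hf i
      simp only [Finset.sum_apply, Pi.smul_apply, col_apply, map_apply, smul_eq_mul,
        Pi.zero_apply] at this
      simp only [mulVec, dotProduct, map_apply, g, mul_ite, mul_zero, sum_ite_mem,
        univ_inter, Pi.zero_apply]
      rw [← this]
      exact sum_congr rfl fun j _ => mul_comm _ _
    obtain ⟨t, hlt, htu, j₀, hj₀, hhit⟩ := exists_add_smul_mem_Icc_hits_bound hlq hqu
      (g := g) fun h => hfj₁ (by simpa [g, hj₁] using congrFun h j₁)
    refine ih _ ?_ (q := q + t • g) (by rw [mulVec_add, mulVec_smul, hg, smul_zero, add_zero, hq])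
      hlt htu rfl
    rw [← hN]
    refine card_lt_card ⟨fun j hj => ?_, fun hsub => ?_⟩
    · by_contra hjS
      have hgj : g j = 0 := if_neg hjS
      simp only [hS, mem_filter, mem_univ, true_and, Pi.add_apply, Pi.smul_apply,
        hgj, smul_zero, add_zero] at hj hjS
      exact hjS hj
    · have hj₀S : j₀ ∈ S := by_contra fun h => hj₀ (if_neg h)
      have := hsub hj₀S
      simp only [mem_filter, mem_univ, true_and, Pi.add_apply, Pi.smul_apply,
        smul_eq_mul] at this
      exact hhit.elim this.1 this.2

theorem IsTotallyUnimodular.exists_zero_one_decomposition {n : Type*} [Fintype n]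
    {A : Matrix m n ℤ} (hA : A.IsTotallyUnimodular) (b : m → ℤ) (N : ℕ) {z : n → ℤ}
    (hz : ∀ j, 0 ≤ z j ∧ z j ≤ N) (hAz : A *ᵥ z = (N : ℤ) • b) :
    ∃ x : Fin N → n → ℤ, (∀ k j, x k j = 0 ∨ x k j = 1) ∧ (∀ k, A *ᵥ x k = b) ∧
      ∀ j, ∑ k, x k j = z j := by
  induction N generalizing z with
  | zero => exact ⟨Fin.elim0, fun k => k.elim0, fun k => k.elim0, fun j => by
      have := hz j
      simp only [Nat.cast_zero] at this
      simp only [univ_eq_empty, sum_empty]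
      omega⟩
  | succ N ih =>
    have hN : (0 : ℚ) < N + 1 := by positivity
    let q : n → ℚ := fun j => z j / (N + 1)
    have hq : A.map (↑) *ᵥ q = (↑) ∘ b := by
      funext i
      have := congrFun hAz i
      simp only [mulVec, dotProduct, map_apply, Function.comp_apply, Pi.smul_apply,
        smul_eq_mul, q] at this ⊢
      simp_rw [mul_div_assoc', ← sum_div]
      rw [div_eq_iff hN.ne']
      exact_mod_cast (by rw [this]; push_cast; ring)
    have hz' : ∀ j, (0 : ℚ) ≤ z j ∧ (z j : ℚ) ≤ N + 1 := fun j =>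
      ⟨by exact_mod_cast (hz j).1, by exact_mod_cast (hz j).2⟩
    have hlq : (↑) ∘ (fun j => max 0 (z j - N)) ≤ q := fun j => by
      simp only [Function.comp_apply, Int.cast_max, Int.cast_zero, Int.cast_sub,
        Int.cast_natCast, max_le_iff, q]
      rw [le_div_iff₀ hN, le_div_iff₀ hN]
      constructor <;> nlinarith [hz' j]
    have hqu : q ≤ (↑) ∘ (fun j => min 1 (z j)) := fun j => by
      simp only [Function.comp_apply, Int.cast_min, Int.cast_one, le_min_iff, q]
      rw [div_le_iff₀ hN, div_le_iff₀ hN]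
      constructor <;> nlinarith [hz' j]
    obtain ⟨w, hAw, hlw, hwu⟩ := hA.exists_int_mulVec_eq_of_le_of_le hq hlq hqu
    have hbox : ∀ j, max 0 (z j - N) ≤ w j ∧ w j ≤ min 1 (z j) := fun j => ⟨hlw j, hwu j⟩
    obtain ⟨x, hx01, hAx, hsum⟩ := ih (z := z - w)
      (fun j => show 0 ≤ z j - w j ∧ z j - w j ≤ N by have := hz j; have := hbox j; omega)
      (by rw [mulVec_sub, hAz, hAw]; push_cast; module)
    have hw01 : ∀ j, w j = 0 ∨ w j = 1 := fun j => by have := hbox j; omega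
    refine ⟨Fin.cons w x, fun k => Fin.cases hw01 hx01 k, fun k => Fin.cases hAw hAx k,
      fun j => ?_⟩
    simp [Fin.sum_univ_succ, hsum]

end Matrix

theorem Fin.val_le_val_of_strictMono {k n : ℕ} {e : Fin k → Fin n} (he : StrictMono e) :
    ∀ i : Fin k, (i : ℕ) ≤ e i
  | ⟨0, _⟩ => Nat.zero_le _
  | ⟨i + 1, hi⟩ =>
    (Fin.val_le_val_of_strictMono he ⟨i, by omega⟩).trans_lt (he (Nat.lt_succ_self i))

theorem Finset.sum_filter_val_lt_card_le_sum {M : Type*} [AddCommMonoid M] [PartialOrder M]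
    [IsOrderedAddMonoid M] {n : ℕ} {f : Fin n → M} (hf : Monotone f) (T : Finset (Fin n)) :
    ∑ k ∈ ({k | (k : ℕ) < #T} : Finset (Fin n)), f k ≤ ∑ k ∈ T, f k := by
  let e := T.orderEmbOfFin rfl
  have hT : #T ≤ n := (card_le_univ T).trans_eq (Fintype.card_fin n)
  have hfirst : ({k | (k : ℕ) < #T} : Finset (Fin n)) = univ.image (Fin.castLE hT) := by
    ext k
    simp only [mem_filter, mem_univ, true_and, mem_image]
    exact ⟨fun hk => ⟨⟨k, hk⟩, rfl⟩, by rintro ⟨i, -, rfl⟩; exact i.2⟩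
  calc ∑ k ∈ ({k | (k : ℕ) < #T} : Finset (Fin n)), f k = ∑ i, f (Fin.castLE hT i) := by
        rw [hfirst, sum_image fun i _ j _ h => Fin.castLE_injective hT h]
    _ ≤ ∑ i, f (e i) := sum_le_sum fun i _ => hf (Fin.val_le_val_of_strictMono e.strictMono i)
    _ = ∑ k ∈ T, f k := by
        conv_rhs => rw [← T.image_orderEmbOfFin_univ rfl]
        exact (sum_image fun i _ j _ h => e.injective h).symm

section Compression

variable {n d : ℕ} {x : Fin n → Fin d → ℤ}

theorem sum_eq_card_filter_eq_one {ι : Type*} [Fintype ι] {f : ι → ℤ}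
    (hf : ∀ k, f k = 0 ∨ f k = 1) : ∑ k, f k = #{k | f k = 1} := by
  rw [natCast_card_filter]
  exact sum_congr rfl fun k _ => by rcases hf k with h | h <;> simp [h]

theorem compression_apply (hx : ∀ k i, x k i = 0 ∨ x k i = 1) (k : Fin n) (i : Fin d) :
    compression n d x k i = if (k : ℕ) < #{l | x l i = 1} then 1 else 0 := by
  rw [compression, sum_eq_card_filter_eq_one (hx · i)]
  congr 1
  simp only [eq_iff_iff]
  omega

theorem compression_eq_zero_or_eq_one (k : Fin n) (i : Fin d) :
    compression n d x k i = 0 ∨ compression n d x k i = 1 := by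
  unfold compression
  split_ifs <;> simp

theorem compression_congr {y : Fin n → Fin d → ℤ} (h : ∀ i, ∑ k, x k i = ∑ k, y k i) :
    compression n d x = compression n d y := by
  funext k i
  simp only [compression, h]

theorem sum_compression (hx : ∀ k i, x k i = 0 ∨ x k i = 1) (i : Fin d) :
    ∑ k, compression n d x k i = ∑ k, x k i := by
  simp only [compression_apply hx, sum_boole, Fin.card_filter_val_lt,
    sum_eq_card_filter_eq_one (hx · i)]
  rw [min_eq_right ((card_le_univ _).trans_eq (Fintype.card_fin n))]

theorem pairing_compression_le {c : Fin n → Fin d → ℤ} (hc : ∀ i, Monotone (c · i))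
    (hx : ∀ k i, x k i = 0 ∨ x k i = 1) :
    pairing n d c (compression n d x) ≤ pairing n d c x := by
  unfold pairing
  rw [sum_comm, sum_comm (f := fun k i => c k i * x k i)]
  refine sum_le_sum fun i _ => ?_
  calc ∑ k, c k i * compression n d x k i
      = ∑ k ∈ ({k | (k : ℕ) < #{l | x l i = 1}} : Finset (Fin n)), c k i := by
        simp only [compression_apply hx, mul_ite, mul_one, mul_zero, sum_ite, sum_const_zero,
          add_zero]
    _ ≤ ∑ k ∈ ({l | x l i = 1} : Finset (Fin n)), c k i := sum_filter_val_lt_card_le_sum (hc i) _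
    _ = ∑ k, c k i * x k i := by
        rw [sum_filter]
        exact sum_congr rfl fun k _ => by rcases hx k i with h | h <;> simp [h]

theorem sum_nonneg_and_le_of_zero_one (hx : ∀ k i, x k i = 0 ∨ x k i = 1) (i : Fin d) :
    0 ≤ ∑ k, x k i ∧ ∑ k, x k i ≤ n := by
  rw [sum_eq_card_filter_eq_one (hx · i)]
  exact ⟨by positivity, by exact_mod_cast (card_le_univ _).trans_eq (Fintype.card_fin n)⟩

theorem mulVec_sum_compression {m : ℕ} {A : Matrix (Fin m) (Fin d) ℤ} {b : Fin m → ℤ}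
    (hx01 : ∀ k i, x k i = 0 ∨ x k i = 1) (hx : ∀ k, A *ᵥ x k = b) :
    A *ᵥ (fun i => ∑ k, compression n d x k i) = (n : ℤ) • b := by
  simp_rw [sum_compression hx01, ← Finset.sum_apply, mulVec_sum, hx, sum_const, card_univ,
    Fintype.card_fin, natCast_zsmul]

theorem setOf_zero_one_finite :
    {x : Fin n → Fin d → ℤ | ∀ k i, x k i = 0 ∨ x k i = 1}.Finite :=
  (Set.Finite.pi fun _ => Set.Finite.pi fun _ => Set.toFinite {0, 1}).subset
    fun x hx k _ i _ => by simpa using hx k i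

end Compression

theorem min_compression_eq_min_relaxation_general (m d n : ℕ)
    (A : Matrix (Fin m) (Fin d) ℤ) (hA : A.IsTotallyUnimodular)
    (b : Fin m → ℤ) (c : Fin n → Fin d → ℤ)
    (hc : ∀ (k : ℕ) (h : k + 1 < n) (i : Fin d),
      c ⟨k, Nat.lt_of_succ_lt h⟩ i ≤ c ⟨k + 1, h⟩ i)
    (hF : ∃ x : Fin n → Fin d → ℤ,
      (∀ k j, x k j = 0 ∨ x k j = 1) ∧ ∀ k, A.mulVec (x k) = b) :
    ∃ v : ℤ,
      IsLeast {v' : ℤ | ∃ x : Fin n → Fin d → ℤ,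
        (∀ k j, x k j = 0 ∨ x k j = 1) ∧ (∀ k, A.mulVec (x k) = b) ∧
        v' = pairing n d c (compression n d x)} v ∧
      IsLeast {v' : ℤ | ∃ y : Fin n → Fin d → ℤ,
        (∀ k j, y k j = 0 ∨ y k j = 1) ∧
        A.mulVec (fun j => ∑ k, y k j) = (n : ℤ) • b ∧
        v' = pairing n d c y} v := by
  have hmono : ∀ i, Monotone (c · i) := fun i => by
    rcases n with _ | n
    · exact fun a => a.elim0
    · exact Fin.monotone_iff_le_succ.mpr fun k => hc k (by omega) i
  obtain ⟨x₀, ⟨hx₀01, hx₀⟩, hmin⟩ := Set.exists_min_image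
    {x : Fin n → Fin d → ℤ | (∀ k j, x k j = 0 ∨ x k j = 1) ∧ ∀ k, A *ᵥ x k = b}
    (fun x => pairing n d c (compression n d x)) (setOf_zero_one_finite.subset fun _ => And.left) hF
  refine ⟨_, ⟨⟨x₀, hx₀01, hx₀, rfl⟩, ?_⟩,
    ⟨⟨_, compression_eq_zero_or_eq_one, mulVec_sum_compression hx₀01 hx₀, rfl⟩, ?_⟩⟩
  · rintro _ ⟨x, hx01, hx, rfl⟩
    exact hmin x ⟨hx01, hx⟩
  · rintro _ ⟨y, hy01, hy, rfl⟩
    obtain ⟨x, hx01, hx, hsum⟩ :=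
      hA.exists_zero_one_decomposition b n (sum_nonneg_and_le_of_zero_one hy01) hy
    calc pairing n d c (compression n d x₀) ≤ pairing n d c (compression n d x) :=
          hmin x ⟨hx01, hx⟩
      _ = pairing n d c (compression n d y) := by rw [compression_congr hsum]
      _ ≤ pairing n d c y := pairing_compression_le hmono hy01

/-- If the feasible set `F = {x ∈ {0,1}^{dn} : Axᵏ = b ∀k}` is nonempty, then the minimum
of `c x̄` over `F` equals the minimum of `cy` over the relaxation
`{y ∈ {0,1}^{dn} : A ∑ₖ yᵏ = n·b}`. -/
theorem min_compression_eq_min_relaxation (m d n : ℕ) (hn : 0 < n)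
    (A : Matrix (Fin m) (Fin d) ℤ) (hA : A.IsTotallyUnimodular)
    (b : Fin m → ℤ) (c : Fin n → Fin d → ℤ)
    (hc : ∀ (k : ℕ) (h : k + 1 < n) (i : Fin d),
      c ⟨k, Nat.lt_of_succ_lt h⟩ i ≤ c ⟨k + 1, h⟩ i)
    (hF : ∃ x : Fin n → Fin d → ℤ,
      (∀ k j, x k j = 0 ∨ x k j = 1) ∧ ∀ k, A.mulVec (x k) = b) :
    ∃ v : ℤ,
      IsLeast {v' : ℤ | ∃ x : Fin n → Fin d → ℤ,
        (∀ k j, x k j = 0 ∨ x k j = 1) ∧ (∀ k, A.mulVec (x k) = b) ∧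
        v' = pairing n d c (compression n d x)} v ∧
      IsLeast {v' : ℤ | ∃ y : Fin n → Fin d → ℤ,
        (∀ k j, y k j = 0 ∨ y k j = 1) ∧
        A.mulVec (fun j => ∑ k, y k j) = (n : ℤ) • b ∧
        v' = pairing n d c y} v :=
  min_compression_eq_min_relaxation_general m d n A hA b c hc hF
end

section
/- Let $A$ be a totally unimodular $m \times d$ integer matrix, let $b \in \mathbb{Z}^m$, let $n$ be a positive integer, and define $c = (c^1, \dots, c^n)$ by $c^k_i := (d+1)^{k-1}$ for all $k, i$. Let $F := \{x = (x^1, \dots, x^n) : x^k \in \{0,1\}^d,\, A x^k = b \text{ for } k = 1, \dots, n\}$. If $x^* \in F$ minimizes $c\bar{x}$ over $x \in F$, then the vulnerability vector $f(x^*) = (|\bar{x^*}^1|, \dots, |\bar{x^*}^n|)$ is lexicographically minimal: for every $x \in F$, either $f(x) = f(x^*)$ or $f(x^*) \prec f(x)$, where $\prec$ means the last nonzero entry of the difference is positive. -/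
/-- The vulnerability vector `f(x) = (|x̄¹|, …, |x̄ⁿ|)` where `|v| = ∑ᵢ |vᵢ|`. -/
def vulnerability (n d : ℕ) (x : Fin n → Fin d → ℤ) : Fin n → ℤ :=
  fun k => ∑ i, |compression n d x k i|

/-- `f ≺ g`: the last nonzero entry of `g - f` is positive. -/
def LexLt (n : ℕ) (f g : Fin n → ℤ) : Prop :=
  ∃ r : Fin n, 0 < g r - f r ∧ ∀ k : Fin n, r < k → g k - f k = 0

lemma pairing_compression_eq (n d : ℕ) (c : Fin n → Fin d → ℤ)
    (hcdef : ∀ k i, c k i = ((d : ℤ) + 1) ^ (k : ℕ)) (x : Fin n → Fin d → ℤ) :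
    pairing n d c (compression n d x)
      = ∑ k : Fin n, ((d : ℤ) + 1) ^ (k : ℕ) * vulnerability n d x k := by
  unfold pairing vulnerability
  refine Finset.sum_congr rfl fun k _ => ?_
  rw [Finset.mul_sum]
  refine Finset.sum_congr rfl fun i _ => ?_
  rw [hcdef]
  unfold compression
  split_ifs <;> simp

lemma vuln_nonneg (n d : ℕ) (x : Fin n → Fin d → ℤ) (k : Fin n) :
    0 ≤ vulnerability n d x k :=
  Finset.sum_nonneg fun i _ => abs_nonneg _

lemma vuln_le (n d : ℕ) (x : Fin n → Fin d → ℤ) (k : Fin n) :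
    vulnerability n d x k ≤ d := by
  have : vulnerability n d x k ≤ ∑ _i : Fin d, (1 : ℤ) := by
    refine Finset.sum_le_sum fun i _ => ?_
    unfold compression
    split_ifs <;> simp
  simpa using this

lemma range_key (d r n : ℕ) (hd : 0 < d) (hr : r < n) (D : ℕ → ℤ)
    (hDr : D r ≤ -1) (hhi : ∀ k, r < k → D k = 0) (hle : ∀ k, D k ≤ d) :
    ∑ k ∈ Finset.range n, ((d : ℤ) + 1) ^ k * D k < 0 := by
  set p : ℤ := (d : ℤ) + 1 with hp
  have hsub : ∑ k ∈ Finset.range (r + 1), p ^ k * D k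
      = ∑ k ∈ Finset.range n, p ^ k * D k := by
    refine Finset.sum_subset (Finset.range_subset_range.mpr hr) fun k hk hk' => ?_
    have : r < k := by
      simp only [Finset.mem_range, not_lt] at hk hk'
      omega
    rw [hhi k this, mul_zero]
  rw [← hsub, Finset.sum_range_succ]
  have hpow : (0 : ℤ) ≤ p ^ r := by positivity
  have h1 : p ^ r * D r ≤ -p ^ r := by
    have := mul_le_mul_of_nonneg_left hDr hpow
    simpa using this
  have h2 : ∑ k ∈ Finset.range r, p ^ k * D k ≤ p ^ r - 1 := by
    have hb : ∑ k ∈ Finset.range r, p ^ k * D k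
        ≤ ∑ k ∈ Finset.range r, p ^ k * (d : ℤ) := by
      refine Finset.sum_le_sum fun k _ => ?_
      exact mul_le_mul_of_nonneg_left (hle k) (by positivity)
    have hgeo : ∑ k ∈ Finset.range r, p ^ k * (d : ℤ) = p ^ r - 1 := by
      have := geom_sum_mul p r
      rw [← Finset.sum_mul]
      have : (∑ k ∈ Finset.range r, p ^ k) * (p - 1) = p ^ r - 1 := geom_sum_mul p r
      simpa [hp] using this
    linarith
  linarith

lemma key (d n : ℕ) (hd : 0 < d) (f g : Fin n → ℤ)
    (hfg : ∀ k, g k - f k ≤ d)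
    (hsum : ∑ k : Fin n, ((d : ℤ) + 1) ^ (k : ℕ) * f k ≤ ∑ k : Fin n, ((d : ℤ) + 1) ^ (k : ℕ) * g k)
    (hne : f ≠ g) : LexLt n f g := by
  classical
  set S : Finset (Fin n) := Finset.univ.filter (fun k => g k ≠ f k) with hS
  have hSne : S.Nonempty := by
    by_contra h
    apply hne
    funext k
    rw [Finset.not_nonempty_iff_eq_empty] at h
    have : k ∉ S := by simp [h]
    simp only [hS, Finset.mem_filter, Finset.mem_univ, true_and, not_not] at this
    exact this.symm
  set r : Fin n := S.max' hSne with hr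
  have hrS : r ∈ S := S.max'_mem hSne
  have hrne : g r ≠ f r := by
    simpa [hS] using hrS
  have hhi : ∀ k : Fin n, r < k → g k - f k = 0 := by
    intro k hk
    by_contra h
    have hkS : k ∈ S := by
      simp only [hS, Finset.mem_filter, Finset.mem_univ, true_and]
      intro heq; exact h (by rw [heq]; ring)
    exact absurd (S.le_max' k hkS) (not_le.mpr hk)
  refine ⟨r, ?_, hhi⟩
  by_contra hcon
  push_neg at hcon
  have hDr : g r - f r ≤ -1 := by
    rcases lt_or_eq_of_le hcon with h | h
    · omega
    · exact absurd (by omega : g r = f r) hrne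
  -- transfer to a ℕ-indexed sum
  set D : ℕ → ℤ := fun k => if h : k < n then g ⟨k, h⟩ - f ⟨k, h⟩ else 0 with hD
  have hDval : ∀ k : Fin n, D (k : ℕ) = g k - f k := by
    intro k
    simp [hD, k.isLt]
  have hsum2 : (0 : ℤ) ≤ ∑ k ∈ Finset.range n, ((d : ℤ) + 1) ^ k * D k := by
    have : (0 : ℤ) ≤ ∑ k : Fin n, ((d : ℤ) + 1) ^ (k : ℕ) * (g k - f k) := by
      have := sub_nonneg.mpr hsum
      rw [← Finset.sum_sub_distrib] at this
      convert this using 2 with k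
      ring
    rw [← Fin.sum_univ_eq_sum_range (fun k => ((d : ℤ) + 1) ^ k * D k) n]
    simpa only [hDval] using this
  have hneg : ∑ k ∈ Finset.range n, ((d : ℤ) + 1) ^ k * D k < 0 := by
    refine range_key d (r : ℕ) n hd r.isLt D ?_ ?_ ?_
    · rw [hDval]; exact hDr
    · intro k hk
      by_cases h : k < n
      · have : D k = g ⟨k, h⟩ - f ⟨k, h⟩ := by simp [hD, h]
        rw [this]
        exact hhi ⟨k, h⟩ (by simpa [Fin.lt_def] using hk)
      · simp [hD, h]
    · intro k
      by_cases h : k < n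
      · have : D k = g ⟨k, h⟩ - f ⟨k, h⟩ := by simp [hD, h]
        rw [this]; exact hfg _
      · simp [hD, h]
  linarith

/-- With `cᵏᵢ := (d+1)^{k-1}`, a minimizer of `c x̄` over
`F = {x ∈ {0,1}^{dn} : Axᵏ = b ∀k}` has lexicographically minimal vulnerability vector. -/
theorem minimizer_is_lex_minimal (m d n : ℕ) (hn : 0 < n)
    (A : Matrix (Fin m) (Fin d) ℤ) (hA : A.IsTotallyUnimodular)
    (b : Fin m → ℤ)
    (c : Fin n → Fin d → ℤ) (hcdef : ∀ k i, c k i = ((d : ℤ) + 1) ^ (k : ℕ))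
    (xstar : Fin n → Fin d → ℤ)
    (hxstar : ∀ k j, xstar k j = 0 ∨ xstar k j = 1)
    (hxstarfeas : ∀ k, A.mulVec (xstar k) = b)
    (hmin : ∀ x : Fin n → Fin d → ℤ,
      (∀ k j, x k j = 0 ∨ x k j = 1) → (∀ k, A.mulVec (x k) = b) →
      pairing n d c (compression n d xstar) ≤ pairing n d c (compression n d x)) :
    ∀ x : Fin n → Fin d → ℤ,
      (∀ k j, x k j = 0 ∨ x k j = 1) → (∀ k, A.mulVec (x k) = b) →
      vulnerability n d x = vulnerability n d xstar ∨
        LexLt n (vulnerability n d xstar) (vulnerability n d x) := by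
  intro x hx hxfeas
  rcases Nat.eq_zero_or_pos d with hd | hd
  · left
    subst hd
    funext k
    simp [vulnerability]
  by_cases heq : vulnerability n d x = vulnerability n d xstar
  · left; exact heq
  right
  have hmin' := hmin x hx hxfeas
  rw [pairing_compression_eq n d c hcdef, pairing_compression_eq n d c hcdef] at hmin'
  refine key d n hd (vulnerability n d xstar) (vulnerability n d x) ?_ hmin' ?_
  · intro k
    have h1 := vuln_le n d x k
    have h2 := vuln_nonneg n d xstar k
    omega
  · intro h
    exact heq h.symm
end

section
/- Let $A$ be a totally unimodular $m \times d$ integer matrix, let $b \in \mathbb{Z}^m$, and let $n$ be a positive integer. If the set $F := \{(x^1, \dots, x^n) : x^k \in \{0,1\}^d,\, A x^k = b \text{ for } k = 1, \dots, n\}$ is nonempty, then the minimum of $|x^1 \wedge \cdots \wedge x^n|$ over $(x^1, \dots, x^n) \in F$ equals the minimum of $|z|$ over all pairs $(y, z)$ with $y \in \mathbb{Z}^d$, $0 \le y_j \le n-1$ for all $j$, $z \in \{0,1\}^d$, and $A(y+z) = n \cdot b$. -/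
/-!
For `x ∈ F` put `z = x¹ ∧ ⋯ ∧ xⁿ` and `y = ∑ₖ xᵏ - z`; then `(y, z)` is feasible for the
auxiliary program with the same objective value. Conversely, for feasible `(y, z)` the vector
`w = y + z` satisfies `0 ≤ w ≤ n` and `Aw = nb`, and total unimodularity splits `w` into `n`
binary solutions of `Ax = b`: the point `w / n` solves `Ax = b`, an integer solution `x` with
`⌊w / n⌋ ≤ x ≤ ⌈w / n⌉` is binary, and `w - x` satisfies the same hypotheses with `n - 1`.
The wedge of these solutions is `1` only where `w = n`, which forces `z = 1` there.

The integer solution comes from a rounding argument. Given a solution `f` of `Ax = b`, if the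
columns of `A` at the fractional coordinates of `f` are dependent, moving along a kernel vector
supported on them makes one more coordinate integral while staying in the box
`⌊f⌋ ≤ x ≤ ⌈f⌉`. If they are independent, they contain an invertible square submatrix, which is
unimodular, so Cramer's rule makes the fractional parts of `f` integral, i.e. zero.
-/

section Rounding

variable {K : Type*} [Field K] [LinearOrder K] [IsStrictOrderedRing K] [FloorRing K]

/-- For `c ≠ 0`, the least `t ≥ 0` at which `a + t * c` is an integer. -/
def intHittingTime (a c : K) : K := (((if 0 < c then ⌈a⌉ else ⌊a⌋ : ℤ) : K) - a) / c

theorem intHittingTime_nonneg (a c : K) : 0 ≤ intHittingTime a c := by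
  unfold intHittingTime
  split_ifs with hc
  · exact div_nonneg (sub_nonneg.mpr (Int.le_ceil a)) hc.le
  · exact div_nonneg_of_nonpos (sub_nonpos.mpr (Int.floor_le a)) (not_lt.mp hc)

theorem fract_add_intHittingTime_mul (a : K) {c : K} (hc : c ≠ 0) :
    Int.fract (a + intHittingTime a c * c) = 0 := by
  rw [intHittingTime, div_mul_cancel₀ _ hc, add_sub_cancel, Int.fract_intCast]

theorem add_mul_mem_Icc_floor_ceil {a c t : K} (ht₀ : 0 ≤ t) (ht : t ≤ intHittingTime a c) :
    a + t * c ∈ Set.Icc (⌊a⌋ : K) ⌈a⌉ := by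
  have := Int.floor_le a
  have := Int.le_ceil a
  rcases lt_trichotomy c 0 with hc | rfl | hc
  · have hle := mul_le_mul_of_nonpos_right ht hc.le
    have := mul_nonpos_of_nonneg_of_nonpos ht₀ hc.le
    rw [intHittingTime, if_neg hc.not_gt, div_mul_cancel₀ _ hc.ne] at hle
    constructor <;> linarith
  · simp only [mul_zero, add_zero]
    exact ⟨Int.floor_le a, Int.le_ceil a⟩
  · have hle := mul_le_mul_of_nonneg_right ht hc.le
    have := mul_nonneg ht₀ hc.le
    rw [intHittingTime, if_pos hc, div_mul_cancel₀ _ hc.ne'] at hle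
    constructor <;> linarith

theorem exists_add_smul_mem_Icc_floor_ceil {n : Type*} [Fintype n] (f g : n → K) (hg : g ≠ 0) :
    ∃ t : K, (∀ j, (f + t • g) j ∈ Set.Icc (⌊f j⌋ : K) ⌈f j⌉) ∧
      ∃ j, g j ≠ 0 ∧ Int.fract ((f + t • g) j) = 0 := by
  classical
  obtain ⟨j₀, hj₀⟩ := Function.ne_iff.mp hg
  obtain ⟨j₁, hj₁, hmin⟩ := (Finset.univ.filter fun j => g j ≠ 0).exists_min_image
    (fun j => intHittingTime (f j) (g j)) ⟨j₀, by simpa using hj₀⟩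
  simp only [Finset.mem_filter, Finset.mem_univ, true_and] at hj₁ hmin
  refine ⟨intHittingTime (f j₁) (g j₁), fun j => ?_, j₁, hj₁, fract_add_intHittingTime_mul _ hj₁⟩
  simp only [Pi.add_apply, Pi.smul_apply, smul_eq_mul]
  by_cases hj : g j = 0
  · simpa [hj] using ⟨Int.floor_le (f j), Int.le_ceil (f j)⟩
  · exact add_mul_mem_Icc_floor_ceil (intHittingTime_nonneg _ _) (hmin j hj)

theorem eq_zero_or_one_and_sub_mem_Icc_of_floor_le_le_ceil_div {w x : ℤ} {k : ℕ} (hw₀ : 0 ≤ w)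
    (hw : w ≤ k + 1) (h₁ : ⌊(w : ℚ) / (k + 1)⌋ ≤ x) (h₂ : x ≤ ⌈(w : ℚ) / (k + 1)⌉) :
    (x = 0 ∨ x = 1) ∧ w - x ∈ Set.Icc 0 (k : ℤ) := by
  have hk : (0 : ℚ) < k + 1 := by positivity
  rw [← Int.lt_add_one_iff, Int.floor_lt, div_lt_iff₀ hk] at h₁
  rw [← Int.sub_one_lt_iff, Int.lt_ceil, lt_div_iff₀ hk] at h₂
  have h₁' : w < (x + 1) * (k + 1) := by exact_mod_cast h₁
  have h₂' : (x - 1) * (k + 1) < w := by exact_mod_cast h₂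
  have hx₀ : 0 ≤ x := by nlinarith
  have hx₁ : x ≤ 1 := by nlinarith
  interval_cases x <;> simp <;> omega

end Rounding

section FractSupport

variable {K n : Type*} [Ring K] [LinearOrder K] [FloorRing K] [Fintype n]

def fractSupport (f : n → K) : Finset n := {j | Int.fract (f j) ≠ 0}

theorem mem_fractSupport {f : n → K} {j : n} : j ∈ fractSupport f ↔ Int.fract (f j) ≠ 0 := by
  simp [fractSupport]

end FractSupport

namespace Matrix

variable {m n : Type*} [Fintype n]

theorem intCast_comp_mulVec {R : Type*} [Ring R] (A : Matrix m n ℤ) (w : n → ℤ) :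
    (Int.cast ∘ (A *ᵥ w) : m → R) = A.map Int.cast *ᵥ (Int.cast ∘ w) :=
  funext (RingHom.map_mulVec (Int.castRingHom R) A w)

theorem submatrix_val_mulVec_comp_val {R : Type*} [NonUnitalNonAssocSemiring R]
    (A : Matrix m n R) {s : Finset n} {g : n → R} (hg : ∀ j, g j ≠ 0 → j ∈ s) :
    A.submatrix id ((↑) : s → n) *ᵥ (g ∘ (↑)) = A *ᵥ g := by
  ext i
  simp only [mulVec, dotProduct, submatrix_apply, id, Function.comp_apply]
  rw [Finset.sum_coe_sort s (fun j => A i j * g j)]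
  exact Finset.sum_subset (Finset.subset_univ s) fun j _ hj => by
    simp [not_imp_comm.mp (hg j) hj]

theorem exists_mulVec_eq_zero_of_not_injective_submatrix {R : Type*} [CommRing R]
    (A : Matrix m n R) {s : Finset n}
    (h : ¬ Function.Injective (A.submatrix id ((↑) : s → n)).mulVec) :
    ∃ g ≠ 0, A *ᵥ g = 0 ∧ ∀ j, g j ≠ 0 → j ∈ s := by
  classical
  rw [← coe_mulVecLin, injective_iff_map_eq_zero] at h
  push Not at h
  obtain ⟨u, hu, hu₀⟩ := h
  set g : n → R := fun j => if hj : j ∈ s then u ⟨j, hj⟩ else 0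
  have hgs : ∀ j, g j ≠ 0 → j ∈ s := fun j hj => by
    by_contra hjs
    exact hj (dif_neg hjs)
  have hgu : g ∘ (↑) = u := funext fun j => dif_pos j.2
  refine ⟨g, fun hg => hu₀ (by rw [← hgu, hg]; rfl), ?_, hgs⟩
  rw [← submatrix_val_mulVec_comp_val A hgs, hgu]
  exact hu

variable [DecidableEq n]

theorem IsTotallyUnimodular.isUnit_of_isUnit_map_s14 {K : Type*} [Field K] {M : Matrix n n ℤ}
    (hM : M.IsTotallyUnimodular) (h : IsUnit (M.map (Int.cast : ℤ → K))) : IsUnit M := by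
  have hdet : (M.det : K) ≠ 0 := by
    rw [Int.cast_det]
    exact ((isUnit_iff_isUnit_det _).mp h).ne_zero
  obtain ⟨s, hs⟩ := (isTotallyUnimodular_iff_fintype M).mp hM n id id
  rw [submatrix_id_id] at hs
  rw [isUnit_iff_isUnit_det, ← hs]
  cases s <;> simp_all [← hs]

variable [Fintype m]

theorem exists_isUnit_submatrix_of_mulVec_injective {K : Type*} [Field K] {M : Matrix m n K}
    (hM : Function.Injective M.mulVec) : ∃ r : n → m, IsUnit (M.submatrix r id) := by
  obtain ⟨κ, a, ha, hspan, hli⟩ := exists_linearIndependent' K M.row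
  have : Fintype κ := Fintype.ofInjective a ha
  have hrank : Module.finrank K (Submodule.span K (Set.range M.row)) = Fintype.card n := by
    rw [← rank_eq_finrank_span_row, ← rank_transpose]
    exact LinearIndependent.rank_matrix (mulVec_injective_iff.mp hM)
  have hcard : Fintype.card κ = Fintype.card n := by
    rw [linearIndependent_iff_card_eq_finrank_span.mp hli, Set.finrank, hspan, hrank]
  let e : n ≃ κ := Fintype.equivOfCardEq hcard.symm
  exact ⟨a ∘ e, linearIndependent_rows_iff_isUnit.mp (hli.comp e e.injective)⟩

namespace IsTotallyUnimodular

variable {A : Matrix m n ℤ} (hA : A.IsTotallyUnimodular) {b : m → ℤ}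
include hA

theorem exists_intCast_eq_of_mulVec_injective {K : Type*} [Field K]
    (hinj : Function.Injective (A.map (Int.cast : ℤ → K)).mulVec) {v : n → K} {c : m → ℤ}
    (hv : A.map Int.cast *ᵥ v = Int.cast ∘ c) : ∃ x : n → ℤ, Int.cast ∘ x = v := by
  obtain ⟨r, hr⟩ := exists_isUnit_submatrix_of_mulVec_injective hinj
  rw [submatrix_map] at hr
  have hM : IsUnit (A.submatrix r id) := (hA.submatrix r id).isUnit_of_isUnit_map_s14 hr
  refine ⟨(A.submatrix r id)⁻¹ *ᵥ (c ∘ r), mulVec_injective_iff_isUnit.mpr hr ?_⟩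
  rw [← intCast_comp_mulVec, mulVec_mulVec, mul_nonsing_inv _ ((isUnit_iff_isUnit_det _).mp hM),
    one_mulVec]
  ext i
  change _ = (A.map Int.cast *ᵥ v) (r i)
  rw [hv]
  rfl

section FloorRing

variable {K : Type*} [Field K] [LinearOrder K] [IsStrictOrderedRing K] [FloorRing K]

theorem fractSupport_eq_empty_of_injective {f : n → K} (hf : A.map Int.cast *ᵥ f = Int.cast ∘ b)
    (hinj : Function.Injective
      ((A.submatrix id ((↑) : fractSupport f → n)).map (Int.cast : ℤ → K)).mulVec) :
    fractSupport f = ∅ := by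
  have hfract : A.map Int.cast *ᵥ (fun j => Int.fract (f j)) =
      Int.cast ∘ (b - A *ᵥ fun j => ⌊f j⌋) := by
    change A.map Int.cast *ᵥ (f - Int.cast ∘ fun j => ⌊f j⌋) = _
    rw [mulVec_sub, hf, ← intCast_comp_mulVec]
    ext
    simp
  rw [← submatrix_val_mulVec_comp_val _ fun j => mem_fractSupport.mpr, submatrix_map] at hfract
  obtain ⟨z, hz⟩ := (hA.submatrix id _).exists_intCast_eq_of_mulVec_injective hinj hfract
  refine Finset.eq_empty_of_forall_notMem fun j hj => mem_fractSupport.mp hj ?_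
  have hzj : (z ⟨j, hj⟩ : K) = Int.fract (f j) := congrFun hz ⟨j, hj⟩
  rw [← Int.fract_fract, ← hzj, Int.fract_intCast]

theorem exists_mulVec_eq_of_floor_le_of_le_ceil (f : n → K)
    (hf : A.map Int.cast *ᵥ f = Int.cast ∘ b) :
    ∃ x : n → ℤ, A *ᵥ x = b ∧ ∀ j, ⌊f j⌋ ≤ x j ∧ x j ≤ ⌈f j⌉ := by
  induction hN : (fractSupport f).card using Nat.strong_induction_on generalizing f with
  | _ N ih =>
  by_cases hinj : Function.Injective
      ((A.submatrix id ((↑) : fractSupport f → n)).map (Int.cast : ℤ → K)).mulVec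
  · have hfloor : Int.cast ∘ (fun j => ⌊f j⌋) = f := funext fun j => by
      have := Finset.eq_empty_iff_forall_notMem.mp
        (hA.fractSupport_eq_empty_of_injective hf hinj) j
      rw [mem_fractSupport, not_not, Int.fract, sub_eq_zero] at this
      exact this.symm
    refine ⟨fun j => ⌊f j⌋, (Int.cast_injective (α := K)).comp_left ?_,
      fun j => ⟨le_rfl, Int.floor_le_ceil _⟩⟩
    change Int.cast ∘ _ = Int.cast ∘ b
    rw [intCast_comp_mulVec, hfloor, hf]
  · rw [← submatrix_map] at hinj
    obtain ⟨g, hg, hAg, hgf⟩ := exists_mulVec_eq_zero_of_not_injective_submatrix _ hinj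
    obtain ⟨t, hIcc, j₁, hgj₁, hj₁⟩ := exists_add_smul_mem_Icc_floor_ceil f g hg
    have hsub : fractSupport (f + t • g) ⊂ fractSupport f := by
      refine Finset.ssubset_iff_of_subset (fun j hj => ?_) |>.mpr
        ⟨j₁, hgf j₁ hgj₁, fun h => mem_fractSupport.mp h hj₁⟩
      by_cases hgj : g j = 0
      · simpa [mem_fractSupport, hgj] using hj
      · exact hgf j hgj
    obtain ⟨x, hAx, hx⟩ := ih _ (hN ▸ Finset.card_lt_card hsub) (f + t • g)
      (by rw [mulVec_add, mulVec_smul, hAg, smul_zero, add_zero, hf]) rfl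
    exact ⟨x, hAx, fun j => ⟨(Int.le_floor.mpr (hIcc j).1).trans (hx j).1,
      (hx j).2.trans (Int.ceil_le.mpr (hIcc j).2)⟩⟩

end FloorRing

theorem exists_binary_decomposition (k : ℕ) (w : n → ℤ) (hw : ∀ j, 0 ≤ w j ∧ w j ≤ k)
    (hAw : A *ᵥ w = (k : ℤ) • b) :
    ∃ x : Fin k → n → ℤ, (∀ i j, x i j = 0 ∨ x i j = 1) ∧ (∀ i, A *ᵥ x i = b) ∧ ∑ i, x i = w := by
  induction k generalizing w with
  | zero =>
    refine ⟨Fin.elim0, fun i => i.elim0, fun i => i.elim0, funext fun j => ?_⟩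
    simpa using (le_antisymm (hw j).2 (hw j).1).symm
  | succ k ih =>
    have hf : A.map Int.cast *ᵥ (((k : ℚ) + 1)⁻¹ • (Int.cast ∘ w : n → ℚ)) = Int.cast ∘ b := by
      rw [mulVec_smul, ← intCast_comp_mulVec, hAw]
      ext i
      simp [inv_mul_cancel_left₀ (Nat.cast_add_one_ne_zero (R := ℚ) k)]
    obtain ⟨x₀, hAx₀, hx₀⟩ := hA.exists_mulVec_eq_of_floor_le_of_le_ceil _ hf
    have hx₀w j := eq_zero_or_one_and_sub_mem_Icc_of_floor_le_le_ceil_div (hw j).1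
      (by simpa using (hw j).2) (by simpa [div_eq_inv_mul] using (hx₀ j).1)
      (by simpa [div_eq_inv_mul] using (hx₀ j).2)
    obtain ⟨x, hx, hAx, hsum⟩ := ih (w - x₀) (fun j => (hx₀w j).2)
      (by rw [mulVec_sub, hAw, hAx₀]; push_cast; module)
    refine ⟨Fin.cons x₀ x, Fin.cases (fun j => (hx₀w j).1) hx, Fin.cases hAx₀ hAx, ?_⟩
    rw [Fin.sum_cons, hsum, add_sub_cancel]

end IsTotallyUnimodular

end Matrix

namespace Finset

variable {ι : Type*} {s : Finset ι} (hs : s.Nonempty) {a : ι → ℤ}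

theorem inf'_eq_zero_or_one (ha : ∀ i ∈ s, a i = 0 ∨ a i = 1) :
    s.inf' hs a = 0 ∨ s.inf' hs a = 1 := by
  obtain ⟨i, hi, hia⟩ := s.exists_mem_eq_inf' hs a
  exact hia ▸ ha i hi

theorem inf'_le_sum (ha : ∀ i ∈ s, 0 ≤ a i) : s.inf' hs a ≤ ∑ i ∈ s, a i := by
  obtain ⟨i, hi, hia⟩ := s.exists_mem_eq_inf' hs a
  exact hia ▸ single_le_sum ha hi

theorem sum_le_inf'_add_card_sub_one (ha : ∀ i ∈ s, a i ≤ 1) :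
    ∑ i ∈ s, a i ≤ s.inf' hs a + (#s - 1) := by
  classical
  obtain ⟨i, hi, hia⟩ := s.exists_mem_eq_inf' hs a
  have hrest : ∑ j ∈ s.erase i, a j ≤ #(s.erase i) • 1 :=
    sum_le_card_nsmul _ _ 1 fun j hj => ha j (mem_of_mem_erase hj)
  rw [card_erase_of_mem hi, nsmul_one, Nat.cast_pred (card_pos.mpr hs)] at hrest
  rw [← add_sum_erase s a hi, hia]
  exact add_le_add_right hrest _

end Finset

theorem exists_isLeast_isLeast_of_subset_of_forall_exists_le {S T : Set ℤ} (hS : S.Nonempty)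
    (hbdd : BddBelow S) (hST : S ⊆ T) (hTS : ∀ t ∈ T, ∃ s ∈ S, s ≤ t) :
    ∃ v, IsLeast S v ∧ IsLeast T v := by
  have hmin : IsLeast S (sInf S) := ⟨Int.csInf_mem hS hbdd, fun s hs => csInf_le hbdd hs⟩
  refine ⟨sInf S, hmin, hST hmin.1, fun t ht => ?_⟩
  obtain ⟨s, hs, hst⟩ := hTS t ht
  exact (hmin.2 hs).trans hst

section Auxiliary

open Finset Matrix

variable {m d : Type*} [Fintype d] {n : ℕ} (hne : (univ : Finset (Fin n)).Nonempty)
  {A : Matrix m d ℤ} {b : m → ℤ}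

theorem exists_auxiliary_of_binary_solutions (x : Fin n → d → ℤ)
    (hx : ∀ k j, x k j = 0 ∨ x k j = 1) (hAx : ∀ k, A *ᵥ x k = b) :
    ∃ y z : d → ℤ, (∀ j, 0 ≤ y j ∧ y j ≤ (n : ℤ) - 1) ∧ (∀ j, z j = 0 ∨ z j = 1) ∧
      A *ᵥ (fun j => y j + z j) = (n : ℤ) • b ∧
      ∑ j, |univ.inf' hne (fun k => x k j)| = ∑ j, |z j| := by
  refine ⟨fun j => ∑ k, x k j - univ.inf' hne (fun k => x k j),
    fun j => univ.inf' hne (fun k => x k j), fun j => ⟨?_, ?_⟩,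
    fun j => inf'_eq_zero_or_one hne fun k _ => hx k j, ?_, rfl⟩
  · exact sub_nonneg.mpr (inf'_le_sum hne fun k _ => by rcases hx k j with h | h <;> simp [h])
  · have := sum_le_inf'_add_card_sub_one hne (a := fun k => x k j)
      fun k _ => by rcases hx k j with h | h <;> simp [h]
    simp only [card_univ, Fintype.card_fin] at this
    linarith
  · have hsum : (fun j => ∑ k, x k j - univ.inf' hne (fun k => x k j) +
        univ.inf' hne (fun k => x k j)) = ∑ k, x k := by
      ext j
      simp
    rw [hsum, mulVec_sum]
    simp [hAx]

theorem Matrix.IsTotallyUnimodular.exists_binary_solutions_of_auxiliary [Fintype m]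
    [DecidableEq d] (hA : A.IsTotallyUnimodular) (y z : d → ℤ)
    (hy : ∀ j, 0 ≤ y j ∧ y j ≤ (n : ℤ) - 1) (hz : ∀ j, z j = 0 ∨ z j = 1)
    (hAyz : A *ᵥ (fun j => y j + z j) = (n : ℤ) • b) :
    ∃ x : Fin n → d → ℤ, (∀ k j, x k j = 0 ∨ x k j = 1) ∧ (∀ k, A *ᵥ x k = b) ∧
      ∑ j, |univ.inf' hne (fun k => x k j)| ≤ ∑ j, |z j| := by
  obtain ⟨x, hx, hAx, hsum⟩ := hA.exists_binary_decomposition n _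
    (fun j => by rcases hz j with h | h <;> constructor <;> linarith [hy j]) hAyz
  refine ⟨x, hx, hAx, sum_le_sum fun j _ => ?_⟩
  have hn : n • univ.inf' hne (fun k => x k j) ≤ y j + z j := by
    simpa [← congrFun hsum j] using
      card_nsmul_le_sum univ (fun k => x k j) _ fun k _ => inf'_le _ (mem_univ k)
  rcases inf'_eq_zero_or_one hne (fun k _ => hx k j) with h | h
  · simp [h]
  · rw [h, nsmul_one] at hn
    rw [h, abs_one]
    linarith [hy j, le_abs_self (z j)]

end Auxiliary

/-- **Corollary 1 (via the auxiliary program).** If `F = {(x¹,…,xⁿ) : xᵏ ∈ {0,1}^d,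
Axᵏ = b ∀k}` is nonempty, then the minimum of `|x¹ ∧ ⋯ ∧ xⁿ|` over `F` equals the minimum
of `|z|` over all `(y, z)` with `y ∈ {0,…,n-1}^d`, `z ∈ {0,1}^d`, `A(y+z) = n·b`. -/
theorem min_wedge_eq_min_auxiliary (m d n : ℕ) (hn : 0 < n)
    (A : Matrix (Fin m) (Fin d) ℤ) (hA : A.IsTotallyUnimodular)
    (b : Fin m → ℤ)
    (hF : ∃ x : Fin n → Fin d → ℤ,
      (∀ k j, x k j = 0 ∨ x k j = 1) ∧ ∀ k, A.mulVec (x k) = b) :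
    ∃ v : ℤ,
      IsLeast {v' : ℤ | ∃ x : Fin n → Fin d → ℤ,
        (∀ k j, x k j = 0 ∨ x k j = 1) ∧ (∀ k, A.mulVec (x k) = b) ∧
        v' = ∑ j, |Finset.univ.inf' (Finset.univ_nonempty_iff.mpr ⟨⟨0, hn⟩⟩)
          (fun k => x k j)|} v ∧
      IsLeast {v' : ℤ | ∃ y z : Fin d → ℤ,
        (∀ j, 0 ≤ y j ∧ y j ≤ (n : ℤ) - 1) ∧
        (∀ j, z j = 0 ∨ z j = 1) ∧
        A.mulVec (fun j => y j + z j) = (n : ℤ) • b ∧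
        v' = ∑ j, |z j|} v := by
  have hne : (Finset.univ : Finset (Fin n)).Nonempty := Finset.univ_nonempty_iff.mpr ⟨⟨0, hn⟩⟩
  apply exists_isLeast_isLeast_of_subset_of_forall_exists_le
  · obtain ⟨x, hx, hAx⟩ := hF
    exact ⟨_, x, hx, hAx, rfl⟩
  · exact ⟨0, by rintro _ ⟨x, -, -, rfl⟩; positivity⟩
  · rintro _ ⟨x, hx, hAx, rfl⟩
    exact exists_auxiliary_of_binary_solutions hne x hx hAx
  · rintro _ ⟨y, z, hy, hz, hAyz, rfl⟩
    obtain ⟨x, hx, hAx, hle⟩ := hA.exists_binary_solutions_of_auxiliary hne y z hy hz hAyz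
    exact ⟨_, ⟨x, hx, hAx, rfl⟩, hle⟩
end
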